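/- arXiv:cs/0609103 — 8 statements merged into one kernel-verified Lean document; each statement's English description precedes it below -/
import Mathlib

section
/- For every set L of positive integers and every real number s > 1, there exists a finite subset L' ⊆ L with ⟨L'⟩ = ⟨L⟩ and the following property: for every λ ∈ L \ L' there exist z ≤ λ/s and (not necessarily distinct) λ₁,…,λ_z ∈ L' with λ₁+⋯+λ_z = λ. -/
/-- A positive integer `n` is `L`-admissible if it is the sum of a nonempty
multiset of (not necessarily distinct) elements of `L`. -/
def Admissible (L : Set ℕ) (n : ℕ) : Prop :=
  ∃ m : Multiset ℕ, m ≠ 0 ∧ (∀ x ∈ m, x ∈ L) ∧ m.sum = n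

lemma adm_mono {L₁ L₂ : Set ℕ} (h : L₁ ⊆ L₂) {n : ℕ} (ha : Admissible L₁ n) :
    Admissible L₂ n := by
  obtain ⟨m, hm0, hmem, hsum⟩ := ha
  exact ⟨m, hm0, fun x hx => h (hmem x hx), hsum⟩

lemma adm_add {L : Set ℕ} {a b : ℕ} (ha : Admissible L a) (hb : Admissible L b) :
    Admissible L (a + b) := by
  obtain ⟨m1, h1, hm1, hs1⟩ := ha
  obtain ⟨m2, h2, hm2, hs2⟩ := hb
  refine ⟨m1 + m2, ?_, ?_, by simp [hs1, hs2]⟩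
  · obtain ⟨a', ha'⟩ := Multiset.exists_mem_of_ne_zero h1
    intro h
    have hmem : a' ∈ m1 + m2 := Multiset.mem_add.mpr (Or.inl ha')
    rw [h] at hmem
    simp at hmem
  · intro x hx
    rcases Multiset.mem_add.mp hx with h | h
    · exact hm1 x h
    · exact hm2 x h

lemma adm_sum {L : Set ℕ} (m : Multiset ℕ) (hm : m ≠ 0)
    (h : ∀ x ∈ m, Admissible L x) : Admissible L m.sum := by
  induction m using Multiset.induction with
  | empty => simp at hm
  | cons a t ih =>
    rcases eq_or_ne t 0 with rfl | ht
    · simpa using h a (by simp)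
    · simpa using adm_add (h a (by simp)) (ih ht (fun x hx => h x (by simp [hx])))

/-- For every set `L` of positive integers and every real `s > 1`, there is a
finite subset `L' ⊆ L` with `⟨L'⟩ = ⟨L⟩` such that every `λ ∈ L \ L'` is the
sum of at most `λ / s` (not necessarily distinct) elements of `L'`. -/
theorem finite_subset_efficient_decomposition
    (L : Set ℕ) (hL : ∀ n ∈ L, 0 < n) (s : ℝ) (hs : 1 < s) :
    ∃ L' : Set ℕ, L' ⊆ L ∧ L'.Finite ∧
      (∀ n : ℕ, Admissible L' n ↔ Admissible L n) ∧
      ∀ lam ∈ L \ L', ∃ m : Multiset ℕ,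
        (m.card : ℝ) ≤ (lam : ℝ) / s ∧ (∀ x ∈ m, x ∈ L') ∧ m.sum = lam := by
  by_cases hfin : L.Finite
  · exact ⟨L, subset_rfl, hfin, fun n => Iff.rfl,
      fun lam hlam => absurd hlam.1 hlam.2⟩
  · have hinf : L.Infinite := hfin
    have hs0 : (0:ℝ) < s := lt_trans one_pos hs
    obtain ⟨b, hbL, hbnot⟩ := hinf.exists_notMem_finite (Set.finite_Iic ⌈s⌉₊)
    have hbgt : ⌈s⌉₊ < b := not_le.mp (fun h => hbnot h)
    have hb0 : 0 < b := lt_of_le_of_lt (Nat.zero_le _) hbgt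
    have hbs : s < (b : ℝ) := lt_of_le_of_lt (Nat.le_ceil s) (by exact_mod_cast hbgt)
    have hb0' : (0:ℝ) < b := lt_trans hs0 hbs
    have hδ : 0 < 1/s - 1/b := by
      have := one_div_lt_one_div_of_lt hs0 hbs
      linarith
    -- minimal admissible representative of each residue class mod b
    have hkey : ∀ r : ℕ, ∃ m : Multiset ℕ,
        (∀ x ∈ m, x ∈ L) ∧
        ((∃ n, Admissible L n ∧ n % b = r) →
          (m ≠ 0 ∧ m.sum % b = r ∧ ∀ n, Admissible L n → n % b = r → m.sum ≤ n)) := by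
      intro r
      by_cases hne : ∃ n, Admissible L n ∧ n % b = r
      · have hmem := Nat.sInf_mem (show {n | Admissible L n ∧ n % b = r}.Nonempty from hne)
        obtain ⟨⟨m, hm0, hmL, hmsum⟩, hmod⟩ := hmem
        exact ⟨m, hmL, fun _ => ⟨hm0, by rw [hmsum]; exact hmod,
          fun n hn hnr => hmsum ▸ Nat.sInf_le ⟨hn, hnr⟩⟩⟩
      · exact ⟨0, by simp, fun h => absurd h hne⟩
    choose M hML hMspec using hkey
    set C : ℕ := (Finset.range b).sup (fun r => (M r).card) with hC
    set T : ℕ := ⌈(C : ℝ) / (1/s - 1/b)⌉₊ with hT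
    set L' : Set ℕ := {x | (x ∈ L ∧ x ≤ T) ∨ x = b ∨ ∃ r < b, x ∈ M r} with hL'
    have hsub : L' ⊆ L := by
      rintro x (⟨h, _⟩ | rfl | ⟨r, hr, hx⟩)
      · exact h
      · exact hbL
      · exact hML r x hx
    have hfin' : L'.Finite := by
      apply Set.Finite.subset (Set.Finite.union
        (Set.Finite.union (Set.finite_Iic T) (Set.finite_singleton b))
        (Set.Finite.biUnion (Set.finite_Iio b)
          (fun r _ => (M r).toFinset.finite_toSet)))
      rintro x (⟨_, hx⟩ | rfl | ⟨r, hr, hx⟩)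
      · exact Or.inl (Or.inl hx)
      · exact Or.inl (Or.inr rfl)
      · exact Or.inr (Set.mem_biUnion hr (Multiset.mem_toFinset.mpr hx))
    have decomp : ∀ lam ∈ L, lam ∉ L' → ∃ m : Multiset ℕ,
        (m.card : ℝ) ≤ (lam : ℝ) / s ∧ (∀ x ∈ m, x ∈ L') ∧ m.sum = lam ∧ m ≠ 0 := by
      intro lam hlamL hlam'
      have hlamT : T < lam := by
        by_contra h
        exact hlam' (Or.inl ⟨hlamL, not_lt.mp h⟩)
      have hrb : lam % b < b := Nat.mod_lt _ hb0
      have hadm : Admissible L lam := ⟨{lam}, by simp, by simpa using hlamL, by simp⟩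
      have hex : ∃ n, Admissible L n ∧ n % b = lam % b := ⟨lam, hadm, rfl⟩
      obtain ⟨hM0, hMmod, hMmin⟩ := hMspec (lam % b) hex
      have hfle : (M (lam % b)).sum ≤ lam := hMmin lam hadm rfl
      have hdvd : b ∣ lam - (M (lam % b)).sum :=
        (Nat.modEq_iff_dvd' hfle).mp (by rw [Nat.ModEq, hMmod])
      set k : ℕ := (lam - (M (lam % b)).sum) / b with hk
      have hkb : b * k = lam - (M (lam % b)).sum := Nat.mul_div_cancel' hdvd
      have hkb' : k * b = lam - (M (lam % b)).sum := by rw [mul_comm]; exact hkb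
      refine ⟨M (lam % b) + Multiset.replicate k b, ?_, ?_, ?_, ?_⟩
      · -- cardinality bound
        have hcard : (M (lam % b)).card ≤ C :=
          Finset.le_sup (f := fun r => (M r).card) (Finset.mem_range.mpr hrb)
        have hCδ : (C : ℝ) ≤ (lam : ℝ) * (1/s - 1/b) := by
          have h1 : (C : ℝ) / (1/s - 1/b) ≤ (T : ℝ) := Nat.le_ceil _
          have h2 : (T : ℝ) < (lam : ℝ) := by exact_mod_cast hlamT
          have := (div_le_iff₀ hδ).mp (le_of_lt (lt_of_le_of_lt h1 h2))
          linarith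
        have hkle : (k : ℝ) ≤ (lam : ℝ) / b := by
          rw [le_div_iff₀ hb0']
          have : k * b ≤ lam := by omega
          exact_mod_cast this
        have heq : (lam : ℝ) * (1/s - 1/b) + (lam : ℝ) / b = (lam : ℝ) / s := by ring
        have hcard' : ((M (lam % b)).card : ℝ) ≤ (C : ℝ) := by exact_mod_cast hcard
        simp only [Multiset.card_add, Multiset.card_replicate, Nat.cast_add]
        linarith
      · intro x hx
        rcases Multiset.mem_add.mp hx with h | h
        · exact Or.inr (Or.inr ⟨lam % b, hrb, h⟩)
        · have := Multiset.eq_of_mem_replicate h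
          exact Or.inr (Or.inl this)
      · simp only [Multiset.sum_add, Multiset.sum_replicate, smul_eq_mul]
        omega
      · obtain ⟨a', ha'⟩ := Multiset.exists_mem_of_ne_zero hM0
        intro h
        have hmem : a' ∈ M (lam % b) + Multiset.replicate k b := Multiset.mem_add.mpr (Or.inl ha')
        rw [h] at hmem
        simp at hmem
    have hadm' : ∀ x ∈ L, Admissible L' x := by
      intro x hx
      by_cases hx' : x ∈ L'
      · exact ⟨{x}, by simp, by simpa using hx', by simp⟩
      · obtain ⟨m, _, hmem, hsum, hm0⟩ := decomp x hx hx'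
        exact ⟨m, hm0, hmem, hsum⟩
    refine ⟨L', hsub, hfin', fun n => ⟨adm_mono hsub, ?_⟩, ?_⟩
    · rintro ⟨m, hm0, hmem, hsum⟩
      exact hsum ▸ adm_sum m hm0 (fun x hx => hadm' x (hmem x hx))
    · rintro lam ⟨h1, h2⟩
      obtain ⟨m, ha, hb', hc, _⟩ := decomp lam h1 h2
      exact ⟨m, ha, hb', hc⟩
end

section
/- Let L ⊆ {3,4,5,…} be nonempty and let L' ⊆ L satisfy ⟨L'⟩ = ⟨L⟩. Let V be a finite set with nonnegative symmetric edge weights w satisfying the triangle inequality. Then for every L-cycle cover σ of the complete undirected graph on V there exists an L'-cycle cover σ' with w(σ') ≤ 2·w(σ). In particular, the minimum weight of an L'-cycle cover is at most twice the minimum weight of an L-cycle cover. -/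
section Aux

variable {V : Type*} [DecidableEq V]

private lemma minPeriod_congr {α : Type*} {f g : α → α} {x : α}
    (h : ∀ k, f^[k] x = g^[k] x) :
    Function.minimalPeriod f x = Function.minimalPeriod g x := by
  have hper : ∀ n, Function.IsPeriodicPt f n x ↔ Function.IsPeriodicPt g n x := by
    intro n
    unfold Function.IsPeriodicPt Function.IsFixedPt
    rw [h n]
  have key : ∀ (f g : α → α), (∀ n, Function.IsPeriodicPt f n x ↔ Function.IsPeriodicPt g n x) →
      Function.minimalPeriod f x ≤ Function.minimalPeriod g x := by
    intro f g hper
    rcases Nat.eq_zero_or_pos (Function.minimalPeriod g x) with h0 | hpos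
    · rw [h0]
      by_contra hpos'
      have hfx : 0 < Function.minimalPeriod f x := by omega
      have h1 : Function.IsPeriodicPt g (Function.minimalPeriod f x) x :=
        (hper _).mp (Function.isPeriodicPt_minimalPeriod f x)
      have : 0 < Function.minimalPeriod g x :=
        Function.minimalPeriod_pos_of_mem_periodicPts (Function.mk_mem_periodicPts hfx h1)
      omega
    · exact Function.IsPeriodicPt.minimalPeriod_le hpos
        ((hper _).mpr (Function.isPeriodicPt_minimalPeriod g x))
  exact le_antisymm (key f g hper) (key g f fun n => (hper n).symm)

private lemma prod_formPerm_fixed (bs : List (List V)) (v : V)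
    (h : ∀ b ∈ bs, v ∉ b) : (bs.map List.formPerm).prod v = v := by
  induction bs with
  | nil => rfl
  | cons c t ih =>
    simp only [List.map_cons, List.prod_cons, Equiv.Perm.mul_apply]
    rw [ih (fun b hb => h b (List.mem_cons_of_mem _ hb)),
      List.formPerm_apply_of_notMem (h c List.mem_cons_self)]

private lemma prod_formPerm_apply (bs : List (List V)) (hnd : bs.flatten.Nodup)
    {b : List V} (hb : b ∈ bs) {v : V} (hv : v ∈ b) :
    (bs.map List.formPerm).prod v = b.formPerm v := by
  induction bs with
  | nil => cases hb
  | cons c t ih =>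
    rw [List.flatten_cons, List.nodup_append] at hnd
    obtain ⟨hc, ht, hdisj⟩ := hnd
    simp only [List.map_cons, List.prod_cons, Equiv.Perm.mul_apply]
    rcases List.mem_cons.mp hb with rfl | hbt
    · rw [prod_formPerm_fixed]
      intro b' hb' hvb'
      exact hdisj _ hv _ (List.mem_flatten.mpr ⟨b', hb', hvb'⟩) rfl
    · rw [ih ht hbt]
      refine List.formPerm_apply_of_notMem (fun hcmem => ?_)
      have hmem : b.formPerm v ∈ t.flatten :=
        List.mem_flatten.mpr ⟨b, hbt, List.formPerm_apply_mem_of_mem hv⟩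
      exact hdisj _ hcmem _ hmem rfl

private lemma prod_formPerm_iterate (bs : List (List V)) (hnd : bs.flatten.Nodup)
    {b : List V} (hb : b ∈ bs) {v : V} (hv : v ∈ b) (k : ℕ) :
    (⇑(bs.map List.formPerm).prod)^[k] v = (⇑b.formPerm)^[k] v ∧ (⇑b.formPerm)^[k] v ∈ b := by
  induction k with
  | zero => exact ⟨rfl, hv⟩
  | succ k ih =>
    rw [Function.iterate_succ_apply', Function.iterate_succ_apply', ih.1]
    exact ⟨prod_formPerm_apply bs hnd hb ih.2, List.formPerm_apply_mem_of_mem ih.2⟩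

private lemma minPeriod_formPerm {b : List V} (hnd : b.Nodup) {v : V} (hv : v ∈ b) :
    Function.minimalPeriod (⇑b.formPerm) v = b.length := by
  obtain ⟨i, hi, rfl⟩ := List.mem_iff_getElem.mp hv
  have hlen : 0 < b.length := by omega
  have hiter : ∀ k, (⇑b.formPerm)^[k] b[i] = b[(i + k) % b.length]'(Nat.mod_lt _ hlen) := by
    intro k
    rw [← Equiv.Perm.coe_pow]
    exact List.formPerm_pow_apply_getElem b hnd k i hi
  have hper : Function.IsPeriodicPt (⇑b.formPerm) b.length b[i] := by
    show (⇑b.formPerm)^[b.length] b[i] = b[i]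
    rw [hiter]
    simp [Nat.add_mod_right, Nat.mod_eq_of_lt hi]
  have hmempp : b[i] ∈ Function.periodicPts (⇑b.formPerm) :=
    Function.mk_mem_periodicPts hlen hper
  have hposmp : 0 < Function.minimalPeriod (⇑b.formPerm) b[i] :=
    Function.minimalPeriod_pos_of_mem_periodicPts hmempp
  refine le_antisymm (hper.minimalPeriod_le hlen) ?_
  set m := Function.minimalPeriod (⇑b.formPerm) b[i] with hm
  have h1 : (⇑b.formPerm)^[m] b[i] = b[i] := Function.isPeriodicPt_minimalPeriod _ _
  rw [hiter] at h1
  have h2 : (i + m) % b.length = i := (hnd.getElem_inj_iff).mp h1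
  have h3 : m % b.length = 0 := by
    set r := m % b.length with hr
    have hrlt : r < b.length := Nat.mod_lt _ hlen
    have h4 : (i + r) % b.length = i := by
      rw [hr, Nat.add_mod_mod]
      exact h2
    rcases Nat.lt_or_ge (i + r) b.length with hlt | hge
    · rw [Nat.mod_eq_of_lt hlt] at h4
      omega
    · rw [Nat.mod_eq_sub_mod hge, Nat.mod_eq_of_lt (by omega)] at h4
      omega
  exact Nat.le_of_dvd hposmp (Nat.dvd_of_mod_eq_zero h3)


private lemma path_tri (w : V → V → ℝ) (htri : ∀ u x v, w u v ≤ w u x + w x v) :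
    ∀ (l : List V) (x y : V), w x ((y :: l).getLast (List.cons_ne_nil _ _)) ≤
      w x y + (List.zipWith w (y :: l) l).sum := by
  intro l
  induction l with
  | nil => intro x y; simp
  | cons z t ih =>
    intro x y
    rw [List.getLast_cons (List.cons_ne_nil _ _)]
    calc w x ((z :: t).getLast (List.cons_ne_nil _ _))
        ≤ w x y + w y ((z :: t).getLast (List.cons_ne_nil _ _)) := htri _ y _
      _ ≤ w x y + (w y z + (List.zipWith w (z :: t) t).sum) := by
          have := ih y z
          linarith
      _ = w x y + (List.zipWith w (y :: z :: t) (z :: t)).sum := by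
          rw [List.zipWith_cons_cons, List.sum_cons]

private lemma zipWith_tail_concat (w : V → V → ℝ) :
    ∀ (l : List V) (hl : l ≠ []) (y : V),
      List.zipWith w l (l.tail ++ [y]) = List.zipWith w l l.tail ++ [w (l.getLast hl) y]
  | [], hl, y => absurd rfl hl
  | [a], _, y => by simp
  | a :: b :: t, _, y => by
    have h := zipWith_tail_concat w (b :: t) (List.cons_ne_nil _ _) y
    simp only [List.tail_cons] at h ⊢
    rw [List.cons_append]
    simp only [List.zipWith_cons_cons]
    rw [h, List.getLast_cons (List.cons_ne_nil _ _)]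
    rfl

private lemma dropLast_flatten_sublist :
    ∀ bs : List (List V), ((bs.map List.dropLast).flatten).Sublist bs.flatten
  | [] => List.Sublist.slnil
  | c :: t => by
    simp only [List.map_cons, List.flatten_cons]
    exact (c.dropLast_sublist).append (dropLast_flatten_sublist t)

private lemma block_bound (w : V → V → ℝ) (hsymm : ∀ u v, w u v = w v u)
    (htri : ∀ u x v, w u v ≤ w u x + w x v) (σ : Equiv.Perm V)
    {b : List V} (hnd : b.Nodup) (hlen : 2 ≤ b.length)
    (hch : List.Chain' (fun x y => y = σ x) b) :
    (b.map (fun v => w v (b.formPerm v))).sum ≤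
      2 * ((b.dropLast.map (fun v => w v (σ v))).sum) := by
  have hne : b ≠ [] := by
    intro h; rw [h] at hlen; simp at hlen
  have hpos : 0 < b.length := by omega
  -- step 1 : the formPerm weights are the zipWith weights of b against tail ++ [head]
  have step1 : b.map (fun v => w v (b.formPerm v)) =
      List.zipWith w b (b.tail ++ [b.head hne]) := by
    refine List.ext_getElem ?_ ?_
    · simp [List.length_tail]
      omega
    · intro i h1 h2
      simp only [List.getElem_map, List.getElem_zipWith]
      simp only [List.length_map] at h1
      rw [List.formPerm_apply_getElem b hnd i h1]
      congr 1
      rcases Nat.lt_or_ge (i + 1) b.length with hlt | hge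
      · have hm : (i + 1) % b.length = i + 1 := Nat.mod_eq_of_lt hlt
        have hit : i < (b.tail).length := by simp [List.length_tail]; omega
        rw [List.getElem_append, dif_pos hit, List.getElem_tail]
        simp [hm]
      · have hieq : i + 1 = b.length := by omega
        have hm : (i + 1) % b.length = 0 := by rw [hieq, Nat.mod_self]
        have hit : ¬ i < (b.tail).length := by simp [List.length_tail]; omega
        rw [List.getElem_append, dif_neg hit]
        simp only [List.length_tail]
        have h0 : i - (b.length - 1) = 0 := by omega
        simp [hm, h0, List.getElem_zero]
  -- step 2 : split off the closing edge
  have step2 : List.zipWith w b (b.tail ++ [b.head hne]) =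
      List.zipWith w b b.tail ++ [w (b.getLast hne) (b.head hne)] :=
    zipWith_tail_concat w b hne _
  -- step 5 : the path edges are σ-edges
  have step5 : List.zipWith w b b.tail = b.dropLast.map (fun v => w v (σ v)) := by
    refine List.ext_getElem ?_ ?_
    · simp [List.length_tail]
    · intro i h1 h2
      simp only [List.getElem_zipWith, List.getElem_map, List.getElem_dropLast]
      have hi1 : i + 1 < b.length := by
        simp [List.length_zipWith, List.length_tail] at h1
        omega
      have hchain := List.isChain_iff_getElem.mp hch i (by omega)
      rw [List.getElem_tail, hchain]
  have hsum : (b.map (fun v => w v (b.formPerm v))).sum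
      = (List.zipWith w b b.tail).sum + w (b.getLast hne) (b.head hne) := by
    rw [step1, step2, List.sum_append, List.sum_cons, List.sum_nil]
    ring
  rw [hsum, ← step5]
  obtain ⟨x, y, t, rfl⟩ : ∃ x y t, b = x :: y :: t := by
    match b, hlen with
    | x :: y :: t, _ => exact ⟨x, y, t, rfl⟩
  have hS : w ((x :: y :: t).getLast hne) ((x :: y :: t).head hne) ≤
      (List.zipWith w (x :: y :: t) (x :: y :: t).tail).sum := by
    rw [hsymm]
    simp only [List.head_cons, List.tail_cons, List.zipWith_cons_cons, List.sum_cons]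
    rw [List.getLast_cons (List.cons_ne_nil _ _)]
    exact path_tri w htri t x y
  linarith


/-- The list enumerating the σ-orbit of `a`. -/
private noncomputable def orbList (σ : Equiv.Perm V) (a : V) : List V :=
  (List.range (Function.minimalPeriod (⇑σ) a)).map (fun i => (⇑σ)^[i] a)

private lemma orbList_length (σ : Equiv.Perm V) (a : V) :
    (orbList σ a).length = Function.minimalPeriod (⇑σ) a := by
  simp [orbList]

private lemma orbList_nodup (σ : Equiv.Perm V) (a : V) : (orbList σ a).Nodup := by
  refine List.Nodup.map_on ?_ List.nodup_range
  intro i hi j hj hij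
  exact Function.iterate_injOn_Iio_minimalPeriod
    (by simpa using List.mem_range.mp hi) (by simpa using List.mem_range.mp hj) hij

private lemma orbList_chain' (σ : Equiv.Perm V) (a : V) :
    List.Chain' (fun x y => y = σ x) (orbList σ a) := by
  refine List.isChain_iff_getElem.mpr ?_
  intro i hi
  simp only [orbList, List.get_eq_getElem, List.getElem_map, List.getElem_range]
  exact Function.iterate_succ_apply' (⇑σ) i a

private lemma orbList_mem_iff (σ : Equiv.Perm V) (a v : V) :
    v ∈ orbList σ a ↔ ∃ i < Function.minimalPeriod (⇑σ) a, (⇑σ)^[i] a = v := by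
  simp [orbList, List.mem_map, List.mem_range]
  exact exists_congr fun i => and_congr_right fun _ => eq_comm

private lemma orbList_self_mem (σ : Equiv.Perm V) (a : V)
    (hpos : 0 < Function.minimalPeriod (⇑σ) a) : a ∈ orbList σ a :=
  (orbList_mem_iff σ a a).mpr ⟨0, hpos, rfl⟩

private lemma orbList_inv (σ : Equiv.Perm V) (a v : V)
    (hpos : 0 < Function.minimalPeriod (⇑σ) a)
    (hv : σ v ∈ orbList σ a) : v ∈ orbList σ a := by
  obtain ⟨i, hi, hiv⟩ := (orbList_mem_iff σ a (σ v)).mp hv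
  rcases Nat.eq_zero_or_pos i with rfl | hipos
  · -- σ v = a, so v = σ^[n-1] a
    refine (orbList_mem_iff σ a v).mpr
      ⟨Function.minimalPeriod (⇑σ) a - 1, by omega, ?_⟩
    apply σ.injective
    have hper : (⇑σ)^[Function.minimalPeriod (⇑σ) a] a = a :=
      Function.isPeriodicPt_minimalPeriod (⇑σ) a
    calc σ ((⇑σ)^[Function.minimalPeriod (⇑σ) a - 1] a)
        = (⇑σ)^[Function.minimalPeriod (⇑σ) a - 1 + 1] a :=
          (Function.iterate_succ_apply' (⇑σ) _ a).symm
      _ = σ v := by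
          have h1 : Function.minimalPeriod (⇑σ) a - 1 + 1 = Function.minimalPeriod (⇑σ) a := by
            omega
          rw [h1, hper]
          simpa using hiv

  · refine (orbList_mem_iff σ a v).mpr ⟨i - 1, by omega, ?_⟩
    apply σ.injective
    calc σ ((⇑σ)^[i - 1] a) = (⇑σ)^[i - 1 + 1] a := (Function.iterate_succ_apply' (⇑σ) _ a).symm
      _ = (⇑σ)^[i] a := by congr 1; omega
      _ = σ v := hiv

private lemma exists_reps [Fintype V] (σ : Equiv.Perm V)
    (hpos : ∀ v, 0 < Function.minimalPeriod (⇑σ) v) (s : Finset V)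
    (hcl : ∀ v ∈ s, σ v ∈ s) :
    ∃ qs : List V, ((qs.map (orbList σ)).flatten).Nodup ∧
      (qs.map (orbList σ)).flatten.toFinset = s := by
  induction s using Finset.strongInduction with
  | _ s ih =>
    rcases s.eq_empty_or_nonempty with rfl | ⟨a, ha⟩
    · exact ⟨[], by simp, by simp⟩
    · have hsub : (orbList σ a).toFinset ⊆ s := by
        intro v hv
        obtain ⟨i, -, rfl⟩ := (orbList_mem_iff σ a v).mp (List.mem_toFinset.mp hv)
        clear hv
        induction i with
        | zero => exact ha
        | succ i ihh =>
          rw [Function.iterate_succ_apply']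
          exact hcl _ ihh
      have hmem : a ∈ (orbList σ a).toFinset :=
        List.mem_toFinset.mpr (orbList_self_mem σ a (hpos a))
      set s' : Finset V := s \ (orbList σ a).toFinset with hs'
      have hss' : s' ⊂ s := by
        exact Finset.sdiff_ssubset hsub ⟨a, hmem⟩
      have hcl' : ∀ v ∈ s', σ v ∈ s' := by
        intro v hv
        rw [hs', Finset.mem_sdiff] at hv ⊢
        refine ⟨hcl v hv.1, fun hmem' => hv.2 ?_⟩
        exact List.mem_toFinset.mpr
          (orbList_inv σ a v (hpos a) (List.mem_toFinset.mp hmem'))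
      obtain ⟨qs', hnd', hcov'⟩ := ih s' hss' hcl'
      refine ⟨a :: qs', ?_, ?_⟩
      · simp only [List.map_cons, List.flatten_cons]
        rw [List.nodup_append]
        refine ⟨orbList_nodup σ a, hnd', fun x hx _ hx' hxx' => ?_⟩
        subst hxx'
        have hx2 : x ∈ s' := hcov' ▸ List.mem_toFinset.mpr hx'
        rw [hs', Finset.mem_sdiff] at hx2
        exact hx2.2 (List.mem_toFinset.mpr hx)
      · simp only [List.map_cons, List.flatten_cons, List.toFinset_append, hcov']
        rw [hs']
        exact Finset.union_sdiff_of_subset hsub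

end Aux

/-- Let `L ⊆ {3,4,5,…}` be nonempty and `L' ⊆ L` with `⟨L'⟩ = ⟨L⟩`. For
nonnegative symmetric edge weights satisfying the triangle inequality, every
`L`-cycle cover `σ` (a permutation all of whose cycle lengths lie in `L`)
admits an `L'`-cycle cover `σ'` of weight at most `2 · w(σ)`. -/
theorem undirected_Lcc_approx_by_finite_subset
    {V : Type*} [Fintype V] [DecidableEq V]
    (L : Set ℕ) (hL3 : ∀ n ∈ L, 3 ≤ n) (hLne : L.Nonempty)
    (L' : Set ℕ) (hsub : L' ⊆ L)
    (hclose : ∀ n : ℕ, Admissible L' n ↔ Admissible L n)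
    (w : V → V → ℝ) (hnn : ∀ u v, 0 ≤ w u v)
    (hsymm : ∀ u v, w u v = w v u)
    (htri : ∀ u x v, w u v ≤ w u x + w x v)
    (σ : Equiv.Perm V) (hσ : ∀ v, Function.minimalPeriod (⇑σ) v ∈ L) :
    ∃ σ' : Equiv.Perm V, (∀ v, Function.minimalPeriod (⇑σ') v ∈ L') ∧
      ∑ v, w v (σ' v) ≤ 2 * ∑ v, w v (σ v) := by
  classical
  have hpos : ∀ v, 0 < Function.minimalPeriod (⇑σ) v := fun v => by
    have := hL3 _ (hσ v); omega
  obtain ⟨qs, hnd, hcov⟩ := exists_reps σ hpos Finset.univ (fun v _ => Finset.mem_univ _)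
  -- choose decompositions of orbit lengths into L' parts
  have hadm : ∀ a : V, ∃ cl : List ℕ,
      (∀ x ∈ cl, x ∈ L') ∧ cl.sum = Function.minimalPeriod (⇑σ) a := by
    intro a
    have hA : Admissible L (Function.minimalPeriod (⇑σ) a) := by
      refine ⟨{Function.minimalPeriod (⇑σ) a}, by simp, ?_, by simp⟩
      intro x hx
      rw [Multiset.mem_singleton.mp hx]
      exact hσ a
    obtain ⟨m, hm0, hmL, hms⟩ := (hclose _).mpr hA
    exact ⟨m.toList, fun x hx => hmL x (by simpa using hx), by simpa using hms⟩
  choose cl hclmem hclsum using hadm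
  have hcl3 : ∀ a : V, ∀ x ∈ cl a, 3 ≤ x := fun a x hx => hL3 _ (hsub (hclmem a x hx))
  let comp : ∀ a : V, Composition ((orbList σ a).length) := fun a =>
    ⟨cl a, fun hi => by have := hcl3 a _ hi; omega,
      by rw [orbList_length]; exact hclsum a⟩
  let blocks : V → List (List V) := fun a => (orbList σ a).splitWrtComposition (comp a)
  have hblocks_flatten : ∀ a, (blocks a).flatten = orbList σ a := fun a =>
    List.flatten_splitWrtComposition _ _
  set bs : List (List V) := (qs.map blocks).flatten with hbs
  have hbsflat : bs.flatten = (qs.map (orbList σ)).flatten := by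
    rw [hbs, List.flatten_flatten, List.map_map]
    congr 1
    exact List.map_congr_left fun a _ => hblocks_flatten a
  have hglnd : bs.flatten.Nodup := by rw [hbsflat]; exact hnd
  have hglcov : bs.flatten.toFinset = Finset.univ := by rw [hbsflat]; exact hcov
  have hmemgl : ∀ v : V, v ∈ bs.flatten := fun v =>
    List.mem_toFinset.mp (hglcov ▸ Finset.mem_univ v)
  -- properties of each block
  have hbprop : ∀ b ∈ bs, b.length ∈ L' ∧ b.Nodup ∧
      List.Chain' (fun x y => y = σ x) b := by
    intro b hb
    rw [hbs] at hb
    obtain ⟨bl, hbl, hbbl⟩ := List.mem_flatten.mp hb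
    obtain ⟨a, _, rfl⟩ := List.mem_map.mp hbl
    have hinf : b <:+: orbList σ a := by
      rw [← hblocks_flatten a]
      exact List.infix_of_mem_flatten hbbl
    refine ⟨?_, (orbList_nodup σ a).sublist hinf.sublist,
      (orbList_chain' σ a).infix hinf⟩
    have hlenmem : b.length ∈ (blocks a).map List.length := List.mem_map_of_mem hbbl
    rw [show (blocks a).map List.length = cl a from
      List.map_length_splitWrtComposition _ _] at hlenmem
    exact hclmem a _ hlenmem
  set σ' : Equiv.Perm V := (bs.map List.formPerm).prod with hσ'
  refine ⟨σ', ?_, ?_⟩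
  · intro v
    obtain ⟨b, hb, hvb⟩ := List.mem_flatten.mp (hmemgl v)
    obtain ⟨hlenL', hbnd, -⟩ := hbprop b hb
    have h1 : Function.minimalPeriod (⇑σ') v = Function.minimalPeriod (⇑b.formPerm) v :=
      minPeriod_congr (fun k => (prod_formPerm_iterate bs hglnd hb hvb k).1)
    rw [h1, minPeriod_formPerm hbnd hvb]
    exact hlenL'
  · have hsum1 : ∑ v, w v (σ' v) = (bs.flatten.map (fun v => w v (σ' v))).sum := by
      rw [← hglcov]
      exact List.sum_toFinset _ hglnd
    have hsum2 : ∑ v, w v (σ v) = (bs.flatten.map (fun v => w v (σ v))).sum := by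
      rw [← hglcov]
      exact List.sum_toFinset _ hglnd
    rw [hsum1, hsum2]
    calc (bs.flatten.map (fun v => w v (σ' v))).sum
        = (bs.map (fun b => (b.map (fun v => w v (σ' v))).sum)).sum := by
          rw [List.map_flatten, List.sum_flatten, List.map_map]
          rfl
      _ ≤ (bs.map (fun b => 2 * ((b.dropLast.map (fun v => w v (σ v))).sum))).sum := by
          refine List.sum_le_sum ?_
          intro b hb
          obtain ⟨hlenL', hbnd, hbch⟩ := hbprop b hb
          have hlen2 : 2 ≤ b.length := by have := hL3 _ (hsub hlenL'); omega
          have heq : b.map (fun v => w v (σ' v)) =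
              b.map (fun v => w v (b.formPerm v)) :=
            List.map_congr_left fun v hv => by
              rw [hσ', prod_formPerm_apply bs hglnd hb hv]
          rw [heq]
          exact block_bound w hsymm htri σ hbnd hlen2 hbch
      _ = 2 * ((bs.map (fun b => (b.dropLast.map (fun v => w v (σ v))).sum)).sum) :=
          List.sum_map_mul_left _ _ _
      _ = 2 * (((bs.map List.dropLast).flatten.map (fun v => w v (σ v))).sum) := by
          conv_rhs => rw [List.map_flatten, List.sum_flatten, List.map_map, List.map_map]
          rfl
      _ ≤ 2 * ((bs.flatten.map (fun v => w v (σ v))).sum) := by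
          have hsl := (dropLast_flatten_sublist bs).map (fun v => w v (σ v))
          have hle := List.Sublist.sum_le_sum hsl ?_
          · linarith
          · intro x hx
            obtain ⟨v, -, rfl⟩ := List.mem_map.mp hx
            exact hnn _ _
end

section
/- Let n ≥ 2 and let d be the cyclic metric on ZMod n. Let ℓ be an integer with 2 ≤ ℓ ≤ n/2 and let f : ZMod ℓ → ZMod n be injective. Then the weight of the cycle visiting f(0), f(1), …, f(ℓ−1) in this cyclic order satisfies ∑_{i ∈ ZMod ℓ} d(f(i), f(i+1)) ≥ 2ℓ − 2. -/
/-- In the cyclic metric on `ZMod n`, a cycle through `ℓ` distinct vertices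
with `2 ≤ ℓ` and `ℓ ≤ n/2` has weight at least `2ℓ − 2`. -/
theorem cyclic_metric_cycle_weight_lower_bound
    (n : ℕ) (hn : 2 ≤ n) (ℓ : ℕ) [NeZero ℓ] (hℓ2 : 2 ≤ ℓ) (hℓn : 2 * ℓ ≤ n)
    (f : ZMod ℓ → ZMod n) (hf : Function.Injective f) :
    2 * ℓ - 2 ≤ ∑ i : ZMod ℓ,
      min ((f (i + 1) - f i).val) ((f i - f (i + 1)).val) := by
  haveI : NeZero n := ⟨by omega⟩
  have hℓpos : 0 < ℓ := by omega
  set δ : ZMod ℓ → ℤ := fun i =>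
    if (f (i+1) - f i).val ≤ (f i - f (i+1)).val then ((f (i+1) - f i).val : ℤ)
    else -((f i - f (i+1)).val : ℤ) with hδ
  have habs : ∀ i, |δ i| = (min ((f (i + 1) - f i).val) ((f i - f (i + 1)).val) : ℤ) := by
    intro i
    simp only [hδ]
    split_ifs with h
    · rw [abs_of_nonneg (Int.natCast_nonneg _)]; omega
    · rw [abs_neg, abs_of_nonneg (Int.natCast_nonneg _)]; omega
  have hcast : ∀ i : ZMod ℓ, ((δ i : ℤ) : ZMod n) = f (i+1) - f i := by
    intro i
    simp only [hδ]
    split_ifs with h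
    · push_cast
      simp [ZMod.natCast_val, ZMod.cast_id]
    · push_cast
      simp [ZMod.natCast_val, ZMod.cast_id, neg_sub]
  set s : ℕ → ℤ := fun j => ∑ k ∈ Finset.range j, δ (k : ZMod ℓ) with hs
  have hsA : ∀ j : ℕ, ((s j : ℤ) : ZMod n) = f (j : ZMod ℓ) - f 0 := by
    intro j
    induction j with
    | zero => simp [hs]
    | succ j ih =>
      have : s (j+1) = s j + δ (j : ZMod ℓ) := Finset.sum_range_succ _ _
      rw [this]
      push_cast
      rw [ih, hcast]
      ring
  have hsegment : ∀ a b : ℕ, a ≤ b →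
      |s b - s a| ≤ ∑ k ∈ Finset.Ico a b, |δ (k : ZMod ℓ)| := by
    intro a b hab
    have : s b - s a = ∑ k ∈ Finset.Ico a b, δ (k : ZMod ℓ) := by
      rw [hs]
      exact (Finset.sum_Ico_eq_sub _ hab).symm
    rw [this]
    exact Finset.abs_sum_le_sum_abs _ _
  set Tot : ℤ := ∑ k ∈ Finset.range ℓ, |δ (k : ZMod ℓ)| with hTot
  -- split helper
  have hsplit : ∀ a b : ℕ, a ≤ b → b ≤ ℓ → |s a| + |s b - s a| + |s ℓ - s b| ≤ Tot := by
    intro a b hab hbl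
    have h1 : Tot = (∑ k ∈ Finset.Ico 0 a, |δ (k : ZMod ℓ)|) +
        (∑ k ∈ Finset.Ico a b, |δ (k : ZMod ℓ)|) + (∑ k ∈ Finset.Ico b ℓ, |δ (k : ZMod ℓ)|) := by
      rw [Finset.sum_Ico_consecutive _ (Nat.zero_le a) hab,
        Finset.sum_Ico_consecutive _ (Nat.zero_le b) hbl, hTot, Finset.range_eq_Ico]
    have e0 : |s a| = |s a - s 0| := by simp [hs]
    rw [h1, e0]
    gcongr
    · exact hsegment 0 a (Nat.zero_le a)
    · exact hsegment a b hab
    · exact hsegment b ℓ hbl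
  -- goal in ℤ
  have hgoal : (2 * ℓ - 2 : ℤ) ≤ Tot → 2 * ℓ - 2 ≤ ∑ i : ZMod ℓ,
      min ((f (i + 1) - f i).val) ((f i - f (i + 1)).val) := by
    intro h
    have hTot' : Tot = ((∑ i : ZMod ℓ,
        min ((f (i + 1) - f i).val) ((f i - f (i + 1)).val) : ℕ) : ℤ) := by
      rw [hTot]
      push_cast
      refine Finset.sum_nbij' (fun k => (k : ZMod ℓ)) (fun i => i.val) ?_ ?_ ?_ ?_ ?_
      · intro a _; exact Finset.mem_univ _
      · intro a _; exact Finset.mem_range.mpr (ZMod.val_lt a)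
      · intro a ha; exact ZMod.val_cast_of_lt (Finset.mem_range.mp ha)
      · intro a _; simp [ZMod.natCast_val, ZMod.cast_id]
      · intro a _; rw [habs]
    omega
  apply hgoal
  -- winding number
  have hwind : (n : ℤ) ∣ s ℓ := by
    have := hsA ℓ
    rw [ZMod.natCast_self, sub_self] at this
    exact (ZMod.intCast_zmod_eq_zero_iff_dvd _ _).mp this
  by_cases hw : s ℓ = 0
  · -- no winding: use distinctness
    have hinj : Set.InjOn (fun k : ℕ => s k) (Finset.range ℓ : Set ℕ) := by
      intro a ha b hb hab
      simp only [Finset.coe_range, Set.mem_Iio] at ha hb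
      have : f (a : ZMod ℓ) = f (b : ZMod ℓ) := by
        have h1 := hsA a
        have h2 := hsA b
        simp only at hab
        rw [hab, h2] at h1
        exact (sub_left_inj.mp h1).symm
      have := hf this
      have h1 : ((a : ZMod ℓ)).val = a := ZMod.val_cast_of_lt ha
      have h2 : ((b : ZMod ℓ)).val = b := ZMod.val_cast_of_lt hb
      rw [← h1, ← h2, this]
    set T : Finset ℤ := (Finset.range ℓ).image (fun k => s k) with hT
    have hTcard : T.card = ℓ := by
      rw [hT, Finset.card_image_of_injOn hinj, Finset.card_range]
    have hTne : T.Nonempty := by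
      rw [← Finset.card_pos, hTcard]; omega
    set M : ℤ := T.max' hTne with hM
    set m : ℤ := T.min' hTne with hm
    have hsub : T ⊆ Finset.Icc m M := by
      intro x hx
      exact Finset.mem_Icc.mpr ⟨Finset.min'_le T x hx, Finset.le_max' T x hx⟩
    have hcard2 : (ℓ : ℤ) ≤ M - m + 1 := by
      have := Finset.card_le_card hsub
      rw [hTcard, Int.card_Icc] at this
      omega
    have h0T : (0 : ℤ) ∈ T := by
      rw [hT]
      refine Finset.mem_image.mpr ⟨0, Finset.mem_range.mpr hℓpos, by simp [hs]⟩
    have hM0 : 0 ≤ M := Finset.le_max' T 0 h0T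
    have hm0 : m ≤ 0 := Finset.min'_le T 0 h0T
    obtain ⟨a, ha, hsa⟩ := Finset.mem_image.mp (T.max'_mem hTne)
    obtain ⟨b, hb, hsb⟩ := Finset.mem_image.mp (T.min'_mem hTne)
    rw [Finset.mem_range] at ha hb
    rcases le_total a b with h | h
    · have := hsplit a b h (le_of_lt hb)
      rw [hsa, hsb, hw] at this
      rw [abs_of_nonneg hM0, abs_of_nonpos (by omega : m - M ≤ 0),
        abs_of_nonneg (by omega : (0:ℤ) ≤ 0 - m)] at this
      omega
    · have := hsplit b a h (le_of_lt ha)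
      rw [hsa, hsb, hw] at this
      rw [abs_of_nonpos hm0, abs_of_nonneg (by omega : (0:ℤ) ≤ M - m),
        abs_of_nonpos (by omega : (0:ℤ) - M ≤ 0)] at this
      omega
  · -- winding: total ≥ n
    have h1 : (n : ℤ) ≤ |s ℓ| := by
      rcases hwind with ⟨c, hc⟩
      have hc0 : c ≠ 0 := by rintro rfl; simp at hc; exact hw hc
      have habc : 1 ≤ |c| := Int.one_le_abs (by omega)
      have hn0 : (0:ℤ) ≤ n := by positivity
      calc (n:ℤ) = n * 1 := by ring
        _ ≤ n * |c| := mul_le_mul_of_nonneg_left habc hn0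
        _ = |s ℓ| := by rw [hc, abs_mul, abs_of_nonneg hn0]
    have h2 := hsegment 0 ℓ (Nat.zero_le ℓ)
    have h3 : s 0 = 0 := by simp [hs]
    rw [h3, sub_zero, ← Finset.range_eq_Ico] at h2
    have h4 : (n:ℤ) ≤ Tot := by rw [hTot]; exact le_trans h1 h2
    omega
end

section
/- Let n ≥ 1, let d be the cyclic metric on ZMod n, and let k ≥ 3. Let σ be a permutation of ZMod n such that every cycle (orbit) of σ has length λ with k ≤ λ ≤ n/2. Then ∑_{v ∈ ZMod n} d(v, σ(v)) ≥ 2n − 2n/k = (2 − 2/k)·n. -/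
open Finset Function Equiv

/-- Signed displacement of a step of `σ`, in `(-n/2, n/2]` lifted to `ℤ`. -/
noncomputable def cyclicDel (n : ℕ) [NeZero n] (σ : Perm (ZMod n)) (w : ZMod n) : ℤ :=
  if 2 * (σ w - w).val ≤ n then ((σ w - w).val : ℤ) else ((σ w - w).val : ℤ) - n

lemma cyclicDel_abs {n : ℕ} [NeZero n] (σ : Perm (ZMod n)) (w : ZMod n) :
    |cyclicDel n σ w| = (min ((σ w - w).val) ((w - σ w).val) : ℤ) := by
  set a := (σ w - w).val with ha
  have haltn : a < n := ZMod.val_lt _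
  have hneg : (w - σ w).val = if (σ w - w) = 0 then 0 else n - a := by
    have h : w - σ w = -(σ w - w) := by ring
    rw [h, ZMod.neg_val]
  unfold cyclicDel
  by_cases h0 : (σ w - w) = 0
  · have ha0 : a = 0 := by rw [ha, h0, ZMod.val_zero]
    rw [hneg, if_pos h0, ← ha, ha0]
    simp
  · rw [hneg, if_neg h0, ← ha]
    have ha0 : a ≠ 0 := fun h => h0 (by rwa [← ZMod.val_eq_zero])
    by_cases h : 2 * a ≤ n
    · rw [if_pos h, abs_of_nonneg (by positivity)]
      omega
    · rw [if_neg h, abs_of_nonpos (by push_cast; omega)]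
      push_cast
      omega

lemma cyclicDel_cast {n : ℕ} [NeZero n] (σ : Perm (ZMod n)) (w : ZMod n) :
    ((cyclicDel n σ w : ℤ) : ZMod n) = σ w - w := by
  unfold cyclicDel
  split <;> push_cast [ZMod.natCast_val, ZMod.cast_id] <;> simp

lemma cyclic_abs_telescope (x : ℕ → ℤ) {u v : ℕ} (h : u ≤ v) :
    |x v - x u| ≤ ∑ i ∈ Finset.Ico u v, |x (i+1) - x i| := by
  have key : x v - x u = ∑ i ∈ Finset.Ico u v, (x (i+1) - x i) := by
    rw [Finset.sum_Ico_eq_sub _ h, Finset.sum_range_sub, Finset.sum_range_sub]; ring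
  rw [key]; exact Finset.abs_sum_le_sum_abs _ _

lemma cyclic_closed_walk (x : ℕ → ℤ) (m : ℕ) (hm : x m = x 0) {a b : ℕ}
    (ha : a ≤ m) (hb : b ≤ m) :
    2 * |x a - x b| ≤ ∑ i ∈ Finset.range m, |x (i+1) - x i| := by
  wlog hab : a ≤ b generalizing a b
  · rw [abs_sub_comm]; exact this hb ha (le_of_not_ge hab)
  have h1 := cyclic_abs_telescope x (Nat.zero_le a)
  have h2 := cyclic_abs_telescope x hab
  have h3 := cyclic_abs_telescope x hb
  have hsplit : ∑ i ∈ Finset.range m, |x (i+1) - x i| =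
      (∑ i ∈ Finset.Ico 0 a, |x (i+1) - x i|) + (∑ i ∈ Finset.Ico a b, |x (i+1) - x i|)
        + ∑ i ∈ Finset.Ico b m, |x (i+1) - x i| := by
    rw [Finset.sum_Ico_consecutive _ (Nat.zero_le a) hab,
      Finset.sum_Ico_consecutive _ (Nat.zero_le b) hb, Finset.range_eq_Ico]
  have t1 : |x a - x b| ≤ |x a - x 0| + |x m - x b| := by
    rw [hm]
    calc |x a - x b| = |(x a - x 0) + (x 0 - x b)| := by ring_nf
      _ ≤ |x a - x 0| + |x 0 - x b| := abs_add_le _ _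
  have t2 : |x a - x b| = |x b - x a| := abs_sub_comm _ _
  rw [hsplit]
  linarith

lemma cyclic_range_of_distinct (s : Finset ℤ) (hs : s.Nonempty) :
    ∃ a ∈ s, ∃ b ∈ s, (s.card : ℤ) - 1 ≤ a - b := by
  refine ⟨s.max' hs, s.max'_mem hs, s.min' hs, s.min'_mem hs, ?_⟩
  have hsub : s ⊆ Finset.Icc (s.min' hs) (s.max' hs) := fun y hy =>
    Finset.mem_Icc.2 ⟨s.min'_le y hy, s.le_max' y hy⟩
  have hc := Finset.card_le_card hsub
  rw [Int.card_Icc] at hc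
  have h3 : (s.card : ℤ) ≤ ((s.max' hs + 1 - s.min' hs).toNat : ℤ) := by exact_mod_cast hc
  have h4 : s.min' hs ≤ s.max' hs := s.min'_le _ (s.max'_mem hs)
  rw [Int.toNat_of_nonneg (by linarith)] at h3
  linarith

lemma cyclic_orbit_sum {n : ℕ} [NeZero n] (σ : Perm (ZMod n)) (v : ZMod n)
    (hpos : 0 < Function.minimalPeriod (⇑σ) v)
    (h2 : 2 * Function.minimalPeriod (⇑σ) v ≤ n) :
    2 * ((Function.minimalPeriod (⇑σ) v : ℤ) - 1) ≤
      ∑ i ∈ Finset.range (Function.minimalPeriod (⇑σ) v), |cyclicDel n σ ((σ ^ i) v)| := by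
  set L := Function.minimalPeriod (⇑σ) v with hL
  set x : ℕ → ℤ := fun i => ∑ j ∈ Finset.range i, cyclicDel n σ ((σ ^ j) v) with hx
  have hstep : ∀ i, x (i+1) - x i = cyclicDel n σ ((σ ^ i) v) := fun i => by
    simp [hx, Finset.sum_range_succ]
  have hsum : ∑ i ∈ Finset.range L, |cyclicDel n σ ((σ ^ i) v)|
      = ∑ i ∈ Finset.range L, |x (i+1) - x i| := by
    refine Finset.sum_congr rfl fun i _ => by rw [hstep]
  have hpowit : ∀ i : ℕ, (σ ^ i) v = (⇑σ)^[i] v := fun i =>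
    (Equiv.Perm.iterate_eq_pow σ i ▸ rfl)
  have hcast : ∀ i, ((x i : ℤ) : ZMod n) = (σ ^ i) v - v := by
    intro i; induction i with
    | zero => simp [hx]
    | succ m ih =>
      have hs : x (m+1) = x m + cyclicDel n σ ((σ ^ m) v) := by linarith [hstep m]
      rw [hs]
      push_cast [ih, cyclicDel_cast]
      rw [Function.iterate_succ_apply']
      ring
  have hinj : Set.InjOn x (Set.Iio L) := by
    intro i hi j hj hij
    have heq : (σ ^ i) v = (σ ^ j) v := by
      have h1 := hcast i; have h2 := hcast j
      rw [hij] at h1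
      exact sub_left_injective (h1.symm.trans h2)
    rw [hpowit, hpowit] at heq
    exact Function.iterate_injOn_Iio_minimalPeriod hi hj heq
  have hdvd : (n : ℤ) ∣ x L := by
    have h0 : ((x L : ℤ) : ZMod n) = 0 := by
      rw [hcast L, hpowit, Function.iterate_minimalPeriod, sub_self]
    exact (ZMod.intCast_zmod_eq_zero_iff_dvd _ n).mp h0
  have hx0 : x 0 = 0 := by simp [hx]
  rw [hsum]
  by_cases hzero : x L = 0
  · set s : Finset ℤ := (Finset.range L).image x with hsdef
    have hcard : s.card = L := by
      rw [hsdef, Finset.card_image_of_injOn (by rw [Finset.coe_range]; exact hinj),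
        Finset.card_range]
    have hne : s.Nonempty := by
      rw [← Finset.card_pos, hcard]; exact hpos
    obtain ⟨a, has, b, hbs, hab⟩ := cyclic_range_of_distinct s hne
    rw [hcard] at hab
    obtain ⟨i, hi, rfl⟩ := Finset.mem_image.mp has
    obtain ⟨j, hj, rfl⟩ := Finset.mem_image.mp hbs
    have hcw := cyclic_closed_walk x L (hzero.trans hx0.symm)
      (le_of_lt (Finset.mem_range.mp hi)) (le_of_lt (Finset.mem_range.mp hj))
    have hle : x i - x j ≤ |x i - x j| := le_abs_self _
    linarith
  · have hge : (n : ℤ) ≤ |x L| := Int.le_of_dvd (abs_pos.mpr hzero) ((dvd_abs _ _).mpr hdvd)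
    have htel := cyclic_abs_telescope x (Nat.zero_le L)
    rw [hx0, sub_zero, ← Finset.range_eq_Ico] at htel
    have h2' : (2 * L : ℤ) ≤ n := by exact_mod_cast h2
    linarith

/-- Let `d` be the cyclic metric on `ZMod n` and `k ≥ 3`. If `σ` is a
permutation of `ZMod n` all of whose cycle lengths `λ` (orbit sizes, i.e.
minimal periods) satisfy `k ≤ λ ≤ n/2`, then the weight of `σ` is at least
`(2 − 2/k)·n`. -/
theorem cyclic_metric_cycle_cover_weight_lower_bound
    (n : ℕ) (hn : 1 ≤ n) [NeZero n] (k : ℕ) (hk : 3 ≤ k)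
    (σ : Equiv.Perm (ZMod n))
    (hlen : ∀ v : ZMod n, k ≤ Function.minimalPeriod (⇑σ) v ∧
        2 * Function.minimalPeriod (⇑σ) v ≤ n) :
    (2 - 2 / (k : ℝ)) * (n : ℝ) ≤
      ∑ v : ZMod n, (min ((σ v - v).val) ((v - σ v).val) : ℝ) := by
  classical
  set F : ZMod n → ℕ := fun v => min ((σ v - v).val) ((v - σ v).val) with hF
  have hpos : ∀ v : ZMod n, 0 < Function.minimalPeriod (⇑σ) v := fun v =>
    lt_of_lt_of_le (by omega) (hlen v).1
  have hpowit : ∀ (i : ℕ) (v : ZMod n), (σ ^ i) v = (⇑σ)^[i] v := fun i v =>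
    (Equiv.Perm.iterate_eq_pow σ i ▸ rfl)
  have hnofix : ∀ v : ZMod n, σ v ≠ v := by
    intro v hv
    have h1 : Function.minimalPeriod (⇑σ) v = 1 :=
      Function.minimalPeriod_eq_one_iff_isFixedPt.mpr hv
    have := (hlen v).1
    omega
  set g : ZMod n → Perm (ZMod n) := fun v => σ.cycleOf v with hg
  set T : Finset (Perm (ZMod n)) := Finset.univ.image g with hT
  -- the fiber of `g v` is the orbit of `v`
  have hfiber : ∀ v : ZMod n,
      Finset.univ.filter (fun w => g w = g v)
        = (Finset.range (Function.minimalPeriod (⇑σ) v)).image (fun i => (σ ^ i) v) := by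
    intro v
    ext w
    simp only [Finset.mem_filter, Finset.mem_univ, true_and, Finset.mem_image,
      Finset.mem_range]
    constructor
    · intro hw
      have hwsupp : w ∈ (σ.cycleOf w).support :=
        (Equiv.Perm.mem_support_cycleOf_iff).mpr
          ⟨Equiv.Perm.SameCycle.refl _ _, Equiv.Perm.mem_support.mpr (hnofix w)⟩
      have hw' : σ.cycleOf w = σ.cycleOf v := hw
      rw [hw'] at hwsupp
      have hsc : σ.SameCycle v w :=
        ((Equiv.Perm.mem_support_cycleOf_iff).mp hwsupp).1
      obtain ⟨i, _, hiw⟩ := hsc.exists_pow_eq'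
      refine ⟨i % Function.minimalPeriod (⇑σ) v,
        Nat.mod_lt _ (hpos v), ?_⟩
      rw [hpowit, Function.iterate_mod_minimalPeriod_eq, ← hpowit, hiw]
    · rintro ⟨i, _, rfl⟩
      rw [hg]
      exact Equiv.Perm.cycleOf_self_apply_pow σ i v
  have hmaps : ∀ v ∈ Finset.univ, g v ∈ T := fun v _ =>
    Finset.mem_image_of_mem g (Finset.mem_univ v)
  -- injectivity of powers on the period range
  have hinj : ∀ v : ZMod n, ∀ i ∈ Finset.range (Function.minimalPeriod (⇑σ) v),
      ∀ j ∈ Finset.range (Function.minimalPeriod (⇑σ) v),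
      (σ ^ i) v = (σ ^ j) v → i = j := by
    intro v i hi j hj hij
    rw [hpowit, hpowit] at hij
    exact Function.iterate_injOn_Iio_minimalPeriod
      (Finset.mem_range.mp hi) (Finset.mem_range.mp hj) hij
  -- per-class bound in ℤ
  have hclass : ∀ c ∈ T,
      2 * (((Finset.univ.filter (fun w => g w = c)).card : ℤ)) - 2 ≤
        ∑ w ∈ Finset.univ.filter (fun w => g w = c), (F w : ℤ) := by
    intro c hc
    obtain ⟨v, _, rfl⟩ := Finset.mem_image.mp hc
    rw [hfiber v]
    rw [Finset.card_image_of_injOn (fun i hi j hj => hinj v i hi j hj),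
      Finset.card_range,
      Finset.sum_image (fun i hi j hj => hinj v i hi j hj)]
    have := cyclic_orbit_sum σ v (hpos v) (hlen v).2
    have habs : ∀ i, |cyclicDel n σ ((σ ^ i) v)| = (F ((σ ^ i) v) : ℤ) := by
      intro i
      rw [cyclicDel_abs, hF]
      push_cast
      rfl
    calc 2 * ((Function.minimalPeriod (⇑σ) v : ℤ)) - 2
        = 2 * ((Function.minimalPeriod (⇑σ) v : ℤ) - 1) := by ring
      _ ≤ ∑ i ∈ Finset.range (Function.minimalPeriod (⇑σ) v),
            |cyclicDel n σ ((σ ^ i) v)| := this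
      _ = ∑ i ∈ Finset.range (Function.minimalPeriod (⇑σ) v), (F ((σ ^ i) v) : ℤ) :=
            Finset.sum_congr rfl fun i _ => habs i
  -- sizes
  have hcardsum : (Finset.univ : Finset (ZMod n)).card =
      ∑ c ∈ T, (Finset.univ.filter (fun w => g w = c)).card :=
    Finset.card_eq_sum_card_fiberwise hmaps
  have hcardn : (Finset.univ : Finset (ZMod n)).card = n := by
    rw [Finset.card_univ, ZMod.card]
  -- each class has size ≥ k
  have hclassbig : ∀ c ∈ T, k ≤ (Finset.univ.filter (fun w => g w = c)).card := by
    intro c hc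
    obtain ⟨v, _, rfl⟩ := Finset.mem_image.mp hc
    rw [hfiber v, Finset.card_image_of_injOn (fun i hi j hj => hinj v i hi j hj),
      Finset.card_range]
    exact (hlen v).1
  have hkT : k * T.card ≤ n := by
    calc k * T.card = ∑ _c ∈ T, k := by rw [Finset.sum_const, smul_eq_mul, mul_comm]
      _ ≤ ∑ c ∈ T, (Finset.univ.filter (fun w => g w = c)).card :=
          Finset.sum_le_sum hclassbig
      _ = n := by rw [← hcardsum, hcardn]
  -- total bound in ℤ
  have htotal : 2 * (n : ℤ) - 2 * T.card ≤ ∑ v : ZMod n, (F v : ℤ) := by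
    have hsplit : ∑ v : ZMod n, (F v : ℤ)
        = ∑ c ∈ T, ∑ w ∈ Finset.univ.filter (fun w => g w = c), (F w : ℤ) :=
      (Finset.sum_fiberwise_of_maps_to hmaps _).symm
    rw [hsplit]
    calc 2 * (n : ℤ) - 2 * T.card
        = ∑ c ∈ T, (2 * (((Finset.univ.filter (fun w => g w = c)).card : ℤ)) - 2) := by
          have hn' : ((n : ℤ)) = ∑ c ∈ T, (((Finset.univ.filter (fun w => g w = c)).card : ℤ)) := by
            rw [← Nat.cast_sum, ← hcardsum, hcardn]
          rw [hn', Finset.sum_sub_distrib, ← Finset.mul_sum, Finset.sum_const, nsmul_eq_mul]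
          ring
      _ ≤ ∑ c ∈ T, ∑ w ∈ Finset.univ.filter (fun w => g w = c), (F w : ℤ) :=
          Finset.sum_le_sum hclass
  -- pass to ℝ
  have hsumR : ∑ v : ZMod n, (min ((σ v - v).val) ((v - σ v).val) : ℝ)
      = ((∑ v : ZMod n, (F v : ℤ) : ℤ) : ℝ) := by
    push_cast [hF]
    rfl
  rw [hsumR]
  have hk0 : (0 : ℝ) < k := by positivity
  have hkTR : (k : ℝ) * T.card ≤ n := by exact_mod_cast hkT
  have htotalR : 2 * (n : ℝ) - 2 * T.card ≤ ((∑ v : ZMod n, (F v : ℤ) : ℤ) : ℝ) := by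
    exact_mod_cast htotal
  have hcle : (T.card : ℝ) ≤ (n : ℝ) / k := by
    rw [le_div_iff₀ hk0]
    linarith [hkTR]
  have : (2 - 2 / (k : ℝ)) * (n : ℝ) = 2 * (n : ℝ) - 2 * ((n : ℝ) / k) := by
    field_simp
  rw [this]
  linarith
end

section
/- Let n ≥ 1, let ℓ ≥ 2 be an integer, and let f : ZMod ℓ → ZMod n be injective. Then the weight of the directed cycle visiting f(0), f(1), …, f(ℓ−1) in this cyclic order, with edge weights w(i,j) = ((j−i) : ZMod n).val, satisfies ∑_{i ∈ ZMod ℓ} w(f(i), f(i+1)) ≥ n. -/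
/-- With directed edge weights `w(i,j) = (j − i).val` on `ZMod n`, any
directed cycle through `ℓ ≥ 2` distinct vertices has weight at least `n`. -/
theorem directed_cyclic_cycle_weight_lower_bound
    (n : ℕ) (hn : 1 ≤ n) (ℓ : ℕ) [NeZero ℓ] (hℓ : 2 ≤ ℓ)
    (f : ZMod ℓ → ZMod n) (hf : Function.Injective f) :
    n ≤ ∑ i : ZMod ℓ, (f (i + 1) - f i).val := by
  haveI : NeZero n := ⟨by omega⟩
  set S := ∑ i : ZMod ℓ, (f (i + 1) - f i).val with hS
  have h0 : ((S : ℕ) : ZMod n) = 0 := by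
    rw [hS, Nat.cast_sum]
    simp only [ZMod.natCast_val, ZMod.cast_id]
    have : (∑ i : ZMod ℓ, f (i + 1)) = ∑ i : ZMod ℓ, f i :=
      Fintype.sum_equiv (Equiv.addRight (1 : ZMod ℓ)) _ _ (fun i => rfl)
    rw [Finset.sum_sub_distrib, this, sub_self]
  have hdvd : n ∣ S := (ZMod.natCast_eq_zero_iff _ _).mp h0
  have hpos : 0 < S := by
    have h1 : (1 : ZMod ℓ) ≠ 0 := by
      have : (ZMod.val (1 : ZMod ℓ)) = 1 := ZMod.val_one_eq_one_mod ℓ ▸ by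
        simp [Nat.mod_eq_of_lt (by omega : 1 < ℓ)]
      intro h; rw [h] at this; simp at this
    have hne : f (0 + 1) - f 0 ≠ 0 := by
      intro h
      apply h1
      have := hf (sub_eq_zero.mp h)
      simpa using this
    have : (f (0 + 1) - f 0).val ≠ 0 := by
      simpa [ZMod.val_eq_zero] using hne
    have hmem : (0 : ZMod ℓ) ∈ (Finset.univ : Finset (ZMod ℓ)) := Finset.mem_univ _
    calc 0 < (f (0 + 1) - f 0).val := Nat.pos_of_ne_zero this
      _ ≤ S := hS ▸ Finset.single_le_sum (fun i _ => Nat.zero_le ((f (i + 1) - f i).val)) hmem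
  exact Nat.le_of_dvd hpos hdvd
end

section
/- Let n ≥ 1 and let σ be a fixed-point-free permutation of ZMod n with exactly m cycles (orbits). Then ∑_{v ∈ ZMod n} ((σ(v) − v) : ZMod n).val ≥ n·m. Consequently, if every cycle of σ has length at most s, then ∑_{v ∈ ZMod n} ((σ(v) − v) : ZMod n).val ≥ n²/s. -/
/-- Per-cycle bound: the weight of any permutation over its support
(if nonempty) is at least `n`. -/
lemma cycle_weight_ge (n : ℕ) [NeZero n] (τ : Equiv.Perm (ZMod n))
    (ht : τ.support.Nonempty) :
    n ≤ ∑ v ∈ τ.support, (τ v - v).val := by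
  set S := ∑ v ∈ τ.support, (τ v - v).val with hS
  have hdvd : (n : ℕ) ∣ S := by
    have hcast : ((S : ℕ) : ZMod n) = 0 := by
      rw [hS]
      rw [Nat.cast_sum]
      simp only [ZMod.natCast_val, ZMod.cast_id]
      rw [Finset.sum_sub_distrib]
      have : ∑ v ∈ τ.support, τ v = ∑ v ∈ τ.support, v := by
        apply Finset.sum_nbij' (fun v => τ v) (fun v => τ⁻¹ v)
        · simp [Equiv.Perm.apply_mem_support]
        · intro a ha
          have := Equiv.Perm.apply_mem_support (f := τ⁻¹) (x := a)
          simp only [Equiv.Perm.support_inv] at this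
          exact this.mpr ha
        · simp
        · simp
        · simp
      rw [this, sub_self]
    exact (ZMod.natCast_eq_zero_iff S n).mp hcast
  have hpos : 0 < S := by
    obtain ⟨a, ha⟩ := ht
    apply Finset.sum_pos' (fun v _ => Nat.zero_le _) ⟨a, ha, ?_⟩
    have : τ a ≠ a := Equiv.Perm.mem_support.mp ha
    have : τ a - a ≠ 0 := sub_ne_zero_of_ne this
    rw [Nat.pos_iff_ne_zero]
    simpa [ZMod.val_eq_zero] using this
  exact Nat.le_of_dvd hpos hdvd

lemma card_support_cycleOf_le_minimalPeriod {α : Type*} [Fintype α] [DecidableEq α]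
    (σ : Equiv.Perm α) (a : α) :
    (σ.cycleOf a).support.card ≤ Function.minimalPeriod (⇑σ) a := by
  have hper : a ∈ Function.periodicPts (⇑σ) := by
    refine ⟨orderOf σ, orderOf_pos σ, ?_⟩
    show (⇑σ)^[orderOf σ] a = a
    rw [Equiv.Perm.iterate_eq_pow, pow_orderOf_eq_one]
    rfl
  have hmp : 0 < Function.minimalPeriod (⇑σ) a :=
    Function.minimalPeriod_pos_of_mem_periodicPts hper
  have hsub : (σ.cycleOf a).support ⊆
      (Finset.range (Function.minimalPeriod (⇑σ) a)).image (fun k => (⇑σ)^[k] a) := by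
    intro y hy
    have hsc : σ.SameCycle a y := (Equiv.Perm.mem_support_cycleOf_iff.mp hy).1
    obtain ⟨i, _, hi⟩ := hsc.exists_pow_eq'
    refine Finset.mem_image.mpr ⟨i % Function.minimalPeriod (⇑σ) a,
      Finset.mem_range.mpr (Nat.mod_lt _ hmp), ?_⟩
    rw [Function.iterate_mod_minimalPeriod_eq, Equiv.Perm.iterate_eq_pow]
    exact hi
  calc (σ.cycleOf a).support.card ≤ _ := Finset.card_le_card hsub
    _ ≤ _ := Finset.card_image_le.trans (le_of_eq (Finset.card_range _))

/-- Let `σ` be a fixed-point-free permutation of `ZMod n` with exactly `m`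
cycles (since `σ` is fixed-point-free, its cycle type lists exactly its
orbits). Then the weight of `σ` under `w(i,j) = (j − i).val` is at least
`n · m`; consequently, if every cycle length (orbit size, i.e. minimal
period) is at most `s`, then the weight is at least `n² / s`. -/
theorem directed_cyclic_cycle_cover_weight_lower_bound
    (n : ℕ) (hn : 1 ≤ n) [NeZero n]
    (σ : Equiv.Perm (ZMod n)) (hfpf : ∀ v, σ v ≠ v)
    (m : ℕ) (hm : σ.cycleType.card = m) :
    n * m ≤ ∑ v : ZMod n, (σ v - v).val ∧
    ∀ s : ℕ, 0 < s → (∀ v, Function.minimalPeriod (⇑σ) v ≤ s) →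
      (n : ℝ) ^ 2 / (s : ℝ) ≤ ∑ v : ZMod n, ((σ v - v).val : ℝ) := by
  have hsupp : σ.support = Finset.univ :=
    Finset.eq_univ_of_forall fun v => Equiv.Perm.mem_support.mpr (hfpf v)
  have huniv : (Finset.univ : Finset (ZMod n)) =
      σ.cycleFactorsFinset.biUnion Equiv.Perm.support := by
    ext v
    simp only [Finset.mem_univ, true_iff, Finset.mem_biUnion]
    exact ⟨σ.cycleOf v,
      Equiv.Perm.cycleOf_mem_cycleFactorsFinset_iff.mpr (Equiv.Perm.mem_support.mpr (hfpf v)),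
      Equiv.Perm.mem_support_cycleOf_iff.mpr
        ⟨Equiv.Perm.SameCycle.refl _ _, Equiv.Perm.mem_support.mpr (hfpf v)⟩⟩
  have hdisj : ∀ c ∈ σ.cycleFactorsFinset, ∀ d ∈ σ.cycleFactorsFinset, c ≠ d →
      Disjoint (Equiv.Perm.support c) (Equiv.Perm.support d) := by
    intro c hc d hd hcd
    exact Equiv.Perm.disjoint_iff_disjoint_support.mp
      (σ.cycleFactorsFinset_pairwise_disjoint hc hd hcd)
  have hcardm : σ.cycleFactorsFinset.card = m := by
    rw [← hm, Equiv.Perm.cycleType_def, Multiset.card_map]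
    rfl
  have hsplit : ∑ v : ZMod n, (σ v - v).val
      = ∑ c ∈ σ.cycleFactorsFinset, ∑ v ∈ c.support, (σ v - v).val := by
    rw [huniv, Finset.sum_biUnion hdisj]
  have hpart1 : n * m ≤ ∑ v : ZMod n, (σ v - v).val := by
    rw [hsplit]
    calc n * m = ∑ _c ∈ σ.cycleFactorsFinset, n := by
          rw [Finset.sum_const, hcardm, smul_eq_mul, mul_comm]
      _ ≤ _ := by
          apply Finset.sum_le_sum
          intro c hc
          obtain ⟨hcyc, happ⟩ := Equiv.Perm.mem_cycleFactorsFinset_iff.mp hc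
          have : ∑ v ∈ c.support, (σ v - v).val = ∑ v ∈ c.support, (c v - v).val :=
            Finset.sum_congr rfl fun v hv => by rw [happ v hv]
          rw [this]
          exact cycle_weight_ge n c hcyc.nonempty_support
  refine ⟨hpart1, fun s hs hle => ?_⟩
  -- n ≤ s * m
  have hnsm : n ≤ s * m := by
    have h1 : σ.cycleType.sum = n := by
      rw [Equiv.Perm.sum_cycleType, hsupp, Finset.card_univ, ZMod.card]
    have h2 : ∀ x ∈ σ.cycleType, x ≤ s := by
      intro x hx
      rw [Equiv.Perm.cycleType_def, Multiset.mem_map] at hx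
      obtain ⟨c, hc, rfl⟩ := hx
      have hc' : c ∈ σ.cycleFactorsFinset := hc
      obtain ⟨hcyc, _⟩ := Equiv.Perm.mem_cycleFactorsFinset_iff.mp hc'
      obtain ⟨a, ha⟩ := hcyc.nonempty_support
      have hceq : c = σ.cycleOf a := Equiv.Perm.cycle_is_cycleOf ha hc'
      calc ((Finset.card ∘ Equiv.Perm.support) c : ℕ)
          = (σ.cycleOf a).support.card := by rw [← hceq]; rfl
        _ ≤ Function.minimalPeriod (⇑σ) a := card_support_cycleOf_le_minimalPeriod σ a
        _ ≤ s := hle a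
    calc n = σ.cycleType.sum := h1.symm
      _ ≤ σ.cycleType.card * s := by
          simpa [Multiset.card_nsmul, smul_eq_mul] using Multiset.sum_le_card_nsmul _ s h2
      _ = s * m := by rw [hm, mul_comm]
  -- real inequality
  have hsum : ((∑ v : ZMod n, (σ v - v).val : ℕ) : ℝ) = ∑ v : ZMod n, ((σ v - v).val : ℝ) := by
    push_cast; ring_nf
  rw [div_le_iff₀ (by exact_mod_cast hs)]
  calc (n : ℝ) ^ 2 = (n : ℝ) * n := sq (n : ℝ)
    _ ≤ (n : ℝ) * (s * m) := by
        apply mul_le_mul_of_nonneg_left _ (by positivity)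
        exact_mod_cast hnsm
    _ = ((n * m : ℕ) : ℝ) * s := by push_cast; ring
    _ ≤ (∑ v : ZMod n, ((σ v - v).val : ℝ)) * s := by
        apply mul_le_mul_of_nonneg_right _ (by positivity)
        rw [← hsum]
        exact_mod_cast hpart1
end

section
/- Let V be a finite set with nonnegative edge weights w on unordered pairs of distinct vertices. Let V₁,…,V_b be pairwise disjoint nonempty subsets of V, and let F* be a set of unordered pairs of distinct vertices of V such that for every i ∈ {1,…,b} at least one pair in F* has exactly one endpoint in V_i. For each i, let e_i be a pair of minimum weight among all pairs with exactly one endpoint in V_i. Then ∑_{i=1}^{b} w(e_i) ≤ 2 · ∑_{e ∈ F*} w(e). -/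
/-- An unordered pair `e` "leaves" a vertex set `S` if it has exactly one
endpoint in `S`. -/
def Leaves {V : Type*} (e : Sym2 V) (S : Set V) : Prop :=
  ∃ u v : V, e = s(u, v) ∧ u ∈ S ∧ v ∉ S

lemma fiber_card_le_two {V : Type*} [Fintype V] [DecidableEq V] {b : ℕ}
    (Vs : Fin b → Set V) (hdisj : ∀ i j, i ≠ j → Disjoint (Vs i) (Vs j))
    (p : Fin b → V) (hp : ∀ i, p i ∈ Vs i)
    (f : Fin b → Sym2 V) (hpf : ∀ i, p i ∈ f i) (e' : Sym2 V) :
    (Finset.univ.filter (fun i => f i = e')).card ≤ 2 := by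
  induction e' using Sym2.ind with
  | _ a c =>
    have hle : (Finset.univ.filter (fun i => f i = s(a, c))).card
        ≤ ({a, c} : Finset V).card := by
      apply Finset.card_le_card_of_injOn (fun i => p i)
      · intro i hi
        have hfi : f i = s(a, c) := (Finset.mem_filter.mp hi).2
        have hmem : p i ∈ s(a, c) := hfi ▸ hpf i
        rcases Sym2.mem_iff.mp hmem with h | h
        · simp [h]
        · simp [h]
      · intro i _ j _ hij
        have hij' : p i = p j := hij
        by_contra hne'
        exact Set.disjoint_left.mp (hdisj i j hne') (hp i) (hij' ▸ hp j)
    have hle2 : ({a, c} : Finset V).card ≤ 2 := by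
      apply (Finset.card_insert_le _ _).trans
      simp
    exact hle.trans hle2

/-- Let `V₁,…,V_b` be pairwise disjoint nonempty vertex sets and `F*` a set of
edges (unordered pairs of distinct vertices) containing, for each `i`, an edge
leaving `V_i`. If `e_i` is a minimum-weight edge leaving `V_i`, then
`∑ i, w(e_i) ≤ 2 · w(F*)`. -/
theorem cheapest_leaving_edges_weight_bound
    {V : Type*} [Fintype V] [DecidableEq V]
    (w : Sym2 V → ℝ) (hnn : ∀ e, 0 ≤ w e)
    (b : ℕ) (Vs : Fin b → Set V)
    (hne : ∀ i, (Vs i).Nonempty)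
    (hdisj : ∀ i j, i ≠ j → Disjoint (Vs i) (Vs j))
    (Fstar : Finset (Sym2 V)) (hFdiag : ∀ e ∈ Fstar, ¬ e.IsDiag)
    (hcover : ∀ i, ∃ e ∈ Fstar, Leaves e (Vs i))
    (e : Fin b → Sym2 V)
    (hleaves : ∀ i, Leaves (e i) (Vs i))
    (hmin : ∀ i, ∀ e' : Sym2 V, Leaves e' (Vs i) → w (e i) ≤ w e') :
    ∑ i : Fin b, w (e i) ≤ 2 * ∑ e' ∈ Fstar, w e' := by
  classical
  choose f hfF hfL using hcover
  choose p q hpq hp hq using hfL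
  have h1 : ∑ i : Fin b, w (e i) ≤ ∑ i : Fin b, w (f i) :=
    Finset.sum_le_sum fun i _ => hmin i (f i) ⟨p i, q i, hpq i, hp i, hq i⟩
  have h2 : ∑ i : Fin b, w (f i)
      = ∑ e' ∈ Fstar, ∑ i ∈ Finset.univ.filter (fun i => f i = e'), w (f i) :=
    (Finset.sum_fiberwise_of_maps_to (fun i _ => hfF i) _).symm
  have h3 : ∀ e' ∈ Fstar,
      ∑ i ∈ Finset.univ.filter (fun i => f i = e'), w (f i) ≤ 2 * w e' := by
    intro e' he'
    have hcongr : ∀ i ∈ Finset.univ.filter (fun i => f i = e'), w (f i) = w e' := by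
      intro i hi
      rw [(Finset.mem_filter.mp hi).2]
    rw [Finset.sum_congr rfl hcongr, Finset.sum_const, nsmul_eq_mul]
    have hcard := fiber_card_le_two Vs hdisj p hp f
      (fun i => by rw [hpq i]; exact Sym2.mem_mk_left _ _) e'
    have hcast : ((Finset.univ.filter (fun i => f i = e')).card : ℝ) ≤ 2 := by
      exact_mod_cast hcard
    exact mul_le_mul_of_nonneg_right hcast (hnn e')
  have h4 : ∑ e' ∈ Fstar, ∑ i ∈ Finset.univ.filter (fun i => f i = e'), w (f i)
      ≤ ∑ e' ∈ Fstar, 2 * w e' := Finset.sum_le_sum h3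
  rw [← Finset.mul_sum] at h4
  exact h1.trans (h2 ▸ h4)
end

section
/- Let V be a finite set with nonnegative edge weights w on ordered pairs of distinct vertices, satisfying the triangle inequality. Let σ be a cyclic permutation of a subset S ⊆ V with |S| = λ (a single directed cycle of length λ ≥ 2), and let λ₁,…,λ_z ≥ 2 satisfy λ₁+⋯+λ_z = λ. Then there exists a permutation σ' of S whose cycle lengths are exactly λ₁,…,λ_z, each of whose cycles has weight at most ∑_{v∈S} w(v, σ(v)); in particular ∑_{v∈S} w(v, σ'(v)) ≤ z · ∑_{v∈S} w(v, σ(v)). -/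
open Finset

lemma chain_tri {V : Type*} (w : V → V → ℝ)
    (htri : ∀ u x v, w u v ≤ w u x + w x v) (g : ℕ → V) :
    ∀ a b : ℕ, a < b → w (g a) (g b) ≤ ∑ i ∈ Finset.Ico a b, w (g i) (g (i + 1)) := by
  intro a b hab
  induction b, hab using Nat.le_induction with
  | base => simp
  | succ b hb ih =>
    rw [Finset.sum_Ico_succ_top (by omega)]
    calc w (g a) (g (b + 1)) ≤ w (g a) (g b) + w (g b) (g (b + 1)) := htri _ _ _
      _ ≤ _ := by linarith

lemma aux_split {V : Type*} [Fintype V] [DecidableEq V]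
    (w : V → V → ℝ) (hnn : ∀ u v, 0 ≤ w u v)
    (htri : ∀ u x v, w u v ≤ w u x + w x v) :
    ∀ (ms : Multiset ℕ) (S : Finset V) (σ : Equiv.Perm V),
      σ.IsCycle → σ.support = S → (∀ x ∈ ms, 2 ≤ x) → ms.sum = S.card →
      ∃ σ' : Equiv.Perm V, σ'.support ⊆ S ∧ σ'.cycleType = ms ∧
        (∀ v ∈ S, ∑ u ∈ (σ'.cycleOf v).support, w u (σ' u) ≤ ∑ x ∈ S, w x (σ x)) ∧
        ∑ v ∈ S, w v (σ' v) ≤ (Multiset.card ms : ℝ) * ∑ v ∈ S, w v (σ v) := by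
  intro ms
  induction ms using Multiset.induction with
  | empty =>
    intro S σ hcyc hsupp _ hsum
    exfalso
    have h2 := hcyc.two_le_card_support
    rw [hsupp] at h2
    simp at hsum
    omega
  | cons n ms' ih =>
    intro S σ hcyc hsupp hms hsum
    by_cases hms0 : ms' = 0
    · subst hms0
      have hn : n = S.card := by simpa using hsum
      refine ⟨σ, hsupp.le, ?_, ?_, ?_⟩
      · rw [hcyc.cycleType, hsupp, ← hn]; rfl
      · intro v hv
        have hmv : σ v ≠ v := Equiv.Perm.mem_support.mp (hsupp ▸ hv)
        rw [hcyc.cycleOf_eq hmv, hsupp]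
      · have : (Multiset.card (n ::ₘ (0:Multiset ℕ)) : ℝ) = 1 := by simp
        rw [this, one_mul]
    · -- main splitting case
      have hn2 : 2 ≤ n := hms n (by simp)
      have hms'2 : ∀ x ∈ ms', 2 ≤ x := fun x hx => hms x (by simp [hx])
      obtain ⟨y, hy⟩ := Multiset.exists_mem_of_ne_zero hms0
      set m := ms'.sum with hm
      have hm2 : 2 ≤ m := le_trans (hms'2 y hy) (Multiset.single_le_sum (fun x _ => Nat.zero_le x) y hy)
      set N := S.card with hNdef
      have hN : N = n + m := by
        rw [Multiset.sum_cons] at hsum; omega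
      have hS0 : S.Nonempty := Finset.card_pos.mp (by omega)
      obtain ⟨v, hv⟩ := hS0
      set f : ℕ → V := fun i => (σ ^ i) v with hf
      have horder : orderOf σ = N := by rw [hcyc.orderOf, hsupp]
      have hper : ∀ i, f (N + i) = f i := by
        intro i
        simp only [hf, pow_add, ← horder, pow_orderOf_eq_one, one_mul]
      have hstep : ∀ i, σ (f i) = f (i + 1) := by
        intro i
        simp only [hf, pow_succ', Equiv.Perm.mul_apply]
      have hvmem : σ v ≠ v := Equiv.Perm.mem_support.mp (hsupp ▸ hv)
      have hinj : ∀ i < N, ∀ j < N, f i = f j → i = j := by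
        suffices h : ∀ i j, i ≤ j → j < N → f i = f j → i = j by
          intro i hi j hj hij
          rcases le_total i j with h' | h'
          · exact h i j h' hj hij
          · exact (h j i h' hi hij.symm).symm
        intro i j hij hj hfe
        by_contra hne
        have hfix : (σ ^ (j - i)) v = v := by
          have h1 : (σ ^ i) ((σ ^ (j - i)) v) = (σ ^ i) v := by
            rw [← Equiv.Perm.mul_apply, ← pow_add, show i + (j - i) = j from by omega]
            exact hfe.symm
          exact (σ ^ i).injective h1
        have hpow : σ ^ (j - i) = 1 := hcyc.pow_eq_one_iff.mpr ⟨v, hvmem, hfix⟩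
        have hdvd := orderOf_dvd_of_pow_eq_one hpow
        rw [horder] at hdvd
        have := Nat.le_of_dvd (by omega) hdvd
        omega
      have hmemS : ∀ i, f i ∈ S := by
        intro i
        rw [← hsupp, Equiv.Perm.mem_support]
        show σ ((σ ^ i) v) ≠ (σ ^ i) v
        have hc : σ ((σ ^ i) v) = (σ ^ i) (σ v) := by
          rw [← Equiv.Perm.mul_apply, ← Equiv.Perm.mul_apply, ← pow_succ', ← pow_succ]
        rw [hc]
        intro h
        exact hvmem ((σ ^ i).injective h)
      have hSimage : S = (Finset.range N).image f := by
        refine (Finset.eq_of_subset_of_card_le ?_ ?_).symm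
        · exact Finset.image_subset_iff.mpr fun i _ => hmemS i
        · rw [Finset.card_image_of_injOn (fun i hi j hj =>
            hinj i (Finset.mem_range.mp hi) j (Finset.mem_range.mp hj)), Finset.card_range]
      have hsumS : ∀ g : V → ℝ, ∑ x ∈ S, g x = ∑ i ∈ Finset.range N, g (f i) := by
        intro g
        rw [hSimage]
        exact Finset.sum_image fun i hi j hj =>
          hinj i (Finset.mem_range.mp hi) j (Finset.mem_range.mp hj)
      set W := ∑ x ∈ S, w x (σ x) with hWdef
      have hW : W = ∑ i ∈ Finset.range N, w (f i) (f (i + 1)) := by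
        rw [hWdef, hsumS]
        exact Finset.sum_congr rfl fun i _ => by rw [hstep]
      have hWnn : 0 ≤ W := Finset.sum_nonneg fun x _ => hnn _ _
      -- the two lists
      set l₁ : List V := (List.range n).map f with hl₁
      set l₂ : List V := (List.range m).map (fun j => f (n + j)) with hl₂
      have hl₁len : l₁.length = n := by simp [hl₁]
      have hl₂len : l₂.length = m := by simp [hl₂]
      have hl₁nd : l₁.Nodup := by
        refine List.Nodup.map_on ?_ List.nodup_range
        intro i hi j hj hij
        exact hinj i (by have := List.mem_range.mp hi; omega) j (by have := List.mem_range.mp hj; omega) hij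
      have hl₂nd : l₂.Nodup := by
        refine List.Nodup.map_on ?_ List.nodup_range
        intro i hi j hj hij
        have := hinj (n + i) (by have := List.mem_range.mp hi; omega)
          (n + j) (by have := List.mem_range.mp hj; omega) hij
        omega
      set c₁ := l₁.formPerm with hc₁
      set c₂ := l₂.formPerm with hc₂
      have happ₁ : ∀ i < n, c₁ (f i) = f ((i + 1) % n) := by
        intro i hi
        have h := List.formPerm_apply_getElem l₁ hl₁nd i (by omega)
        simpa only [hl₁, List.getElem_map, List.getElem_range, List.length_map,
          List.length_range] using h
      have happ₂ : ∀ j < m, c₂ (f (n + j)) = f (n + (j + 1) % m) := by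
        intro j hj
        have h := List.formPerm_apply_getElem l₂ hl₂nd j (by omega)
        simpa only [hl₂, List.getElem_map, List.getElem_range, List.length_map,
          List.length_range] using h
      set S₁ := (Finset.range n).image f with hS₁def
      set S₂ := (Finset.range m).image (fun j => f (n + j)) with hS₂def
      have hne₁ : ∀ x : V, l₁ ≠ [x] := by
        intro x h
        have := congrArg List.length h
        rw [hl₁len] at this
        simp at this
        omega
      have hne₂ : ∀ x : V, l₂ ≠ [x] := by
        intro x h
        have := congrArg List.length h
        rw [hl₂len] at this
        simp at this
        omega
      have hsup₁ : c₁.support = S₁ := by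
        rw [hc₁, List.support_formPerm_of_nodup l₁ hl₁nd hne₁]
        ext x
        simp [hl₁, hS₁def, List.mem_map, Finset.mem_image]
      have hsup₂ : c₂.support = S₂ := by
        rw [hc₂, List.support_formPerm_of_nodup l₂ hl₂nd hne₂]
        ext x
        simp [hl₂, hS₂def, List.mem_map, Finset.mem_image]
      have hcyc₁ : c₁.IsCycle := List.isCycle_formPerm hl₁nd (by omega)
      have hcyc₂ : c₂.IsCycle := List.isCycle_formPerm hl₂nd (by omega)
      have hS₁card : S₁.card = n := by
        rw [hS₁def, Finset.card_image_of_injOn (fun i hi j hj =>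
          hinj i (by have := Finset.mem_range.mp hi; omega) j
            (by have := Finset.mem_range.mp hj; omega)), Finset.card_range]
      have hS₂card : S₂.card = m := by
        rw [hS₂def, Finset.card_image_of_injOn ?_, Finset.card_range]
        intro i hi j hj hij
        have := hinj (n + i) (by have := Finset.mem_range.mp hi; omega)
          (n + j) (by have := Finset.mem_range.mp hj; omega) hij
        omega
      have hdisj : Disjoint S₁ S₂ := by
        rw [Finset.disjoint_left]
        intro x hx₁ hx₂
        rw [hS₁def, Finset.mem_image] at hx₁
        rw [hS₂def, Finset.mem_image] at hx₂
        obtain ⟨i, hi, rfl⟩ := hx₁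
        obtain ⟨j, hj, hji⟩ := hx₂
        rw [Finset.mem_range] at hi hj
        have := hinj (n + j) (by omega) i (by omega) hji
        omega
      have hunion : S₁ ∪ S₂ = S := by
        rw [hSimage]
        ext x
        simp only [hS₁def, hS₂def, Finset.mem_union, Finset.mem_image, Finset.mem_range]
        constructor
        · rintro (⟨i, hi, rfl⟩ | ⟨j, hj, rfl⟩)
          · exact ⟨i, by omega, rfl⟩
          · exact ⟨n + j, by omega, rfl⟩
        · rintro ⟨i, hi, rfl⟩
          rcases lt_or_ge i n with h | h
          · exact Or.inl ⟨i, h, rfl⟩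
          · exact Or.inr ⟨i - n, by omega, by rw [show n + (i - n) = i from by omega]⟩
      -- sums over S₁ and S₂
      have hsumS₁ : ∀ g : V → ℝ, ∑ x ∈ S₁, g x = ∑ i ∈ Finset.range n, g (f i) := by
        intro g
        rw [hS₁def]
        exact Finset.sum_image fun i hi j hj =>
          hinj i (by have := Finset.mem_range.mp hi; omega) j
            (by have := Finset.mem_range.mp hj; omega)
      have hsumS₂ : ∀ g : V → ℝ, ∑ x ∈ S₂, g x = ∑ j ∈ Finset.range m, g (f (n + j)) := by
        intro g
        rw [hS₂def]
        refine Finset.sum_image ?_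
        intro i hi j hj hij
        have := hinj (n + i) (by have := Finset.mem_range.mp hi; omega)
          (n + j) (by have := Finset.mem_range.mp hj; omega) hij
        omega
      set W₁ := ∑ x ∈ S₁, w x (c₁ x) with hW₁def
      set W₂ := ∑ x ∈ S₂, w x (c₂ x) with hW₂def
      -- decompositions of W
      set A := ∑ j ∈ Finset.range (m - 1), w (f (n + j)) (f (n + j + 1)) with hAdef
      set C := ∑ i ∈ Finset.range n, w (f i) (f (i + 1)) with hCdef
      set T := w (f (N - 1)) (f N) with hTdef
      have hWCAT : W = C + A + T := by
        have h1 : ∑ i ∈ Finset.range N, w (f i) (f (i + 1))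
            = ∑ i ∈ Finset.range (N - 1), w (f i) (f (i + 1)) + w (f (N - 1)) (f N) := by
          have := Finset.sum_range_succ (fun i => w (f i) (f (i + 1))) (N - 1)
          rw [show N - 1 + 1 = N from by omega] at this
          exact this
        have h2 : ∑ i ∈ Finset.range n, w (f i) (f (i + 1))
            + ∑ i ∈ Finset.Ico n (N - 1), w (f i) (f (i + 1))
            = ∑ i ∈ Finset.range (N - 1), w (f i) (f (i + 1)) := by
          rw [Finset.range_eq_Ico, Finset.range_eq_Ico]
          exact Finset.sum_Ico_consecutive _ (Nat.zero_le n) (by omega)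
        have h3 : ∑ i ∈ Finset.Ico n (N - 1), w (f i) (f (i + 1)) = A := by
          rw [hAdef, Finset.sum_Ico_eq_sum_range, show N - 1 - n = m - 1 from by omega]
        linarith [hW, h1, h2, h3, hCdef, hTdef]
      -- W₁ ≤ W
      have hW₁le : W₁ ≤ W := by
        have hW₁ : W₁ = ∑ i ∈ Finset.range (n - 1), w (f i) (f (i + 1)) + w (f (n - 1)) (f 0) := by
          rw [hW₁def, hsumS₁ (fun x => w x (c₁ x))]
          have h1 : ∑ i ∈ Finset.range n, w (f i) (c₁ (f i))
              = ∑ i ∈ Finset.range (n - 1), w (f i) (c₁ (f i)) + w (f (n - 1)) (c₁ (f (n - 1))) := by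
            have := Finset.sum_range_succ (fun i => w (f i) (c₁ (f i))) (n - 1)
            rw [show n - 1 + 1 = n from by omega] at this
            exact this
          rw [h1, happ₁ (n - 1) (by omega), show (n - 1 + 1) % n = 0 from by
            rw [show n - 1 + 1 = n from by omega]; exact Nat.mod_self n]
          congr 1
          exact Finset.sum_congr rfl fun i hi => by
            rw [happ₁ i (by have := Finset.mem_range.mp hi; omega),
              Nat.mod_eq_of_lt (by have := Finset.mem_range.mp hi; omega)]
        have hchain : w (f (n - 1)) (f 0) ≤ ∑ i ∈ Finset.Ico (n - 1) N, w (f i) (f (i + 1)) := by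
          have h0 : f 0 = f N := by
            have := hper 0
            rw [Nat.add_zero] at this
            exact this.symm
          rw [h0]
          exact chain_tri w htri f (n - 1) N (by omega)
        have hWsplit : ∑ i ∈ Finset.range (n - 1), w (f i) (f (i + 1))
            + ∑ i ∈ Finset.Ico (n - 1) N, w (f i) (f (i + 1))
            = ∑ i ∈ Finset.range N, w (f i) (f (i + 1)) := by
          rw [Finset.range_eq_Ico, Finset.range_eq_Ico]
          exact Finset.sum_Ico_consecutive _ (Nat.zero_le (n - 1)) (by omega)
        linarith [hW₁, hchain, hW, hWsplit]
      -- W₂ ≤ W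
      have hW₂le : W₂ ≤ W := by
        have hW₂ : W₂ = A + w (f (N - 1)) (f n) := by
          rw [hW₂def, hsumS₂ (fun x => w x (c₂ x))]
          have h1 : ∑ j ∈ Finset.range m, w (f (n + j)) (c₂ (f (n + j)))
              = ∑ j ∈ Finset.range (m - 1), w (f (n + j)) (c₂ (f (n + j)))
                + w (f (n + (m - 1))) (c₂ (f (n + (m - 1)))) := by
            have := Finset.sum_range_succ (fun j => w (f (n + j)) (c₂ (f (n + j)))) (m - 1)
            rw [show m - 1 + 1 = m from by omega] at this
            exact this
          rw [h1, happ₂ (m - 1) (by omega), show (m - 1 + 1) % m = 0 from by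
            rw [show m - 1 + 1 = m from by omega]; exact Nat.mod_self m,
            Nat.add_zero, show n + (m - 1) = N - 1 from by omega]
          congr 1
          rw [hAdef]
          exact Finset.sum_congr rfl fun j hj => by
            rw [happ₂ j (by have := Finset.mem_range.mp hj; omega),
              Nat.mod_eq_of_lt (by have := Finset.mem_range.mp hj; omega),
              show n + (j + 1) = n + j + 1 from by omega]
        have hchain : w (f (N - 1)) (f n) ≤ T + C := by
          have h0 : f n = f (N + n) := (hper n).symm
          rw [h0]
          have hc := chain_tri w htri f (N - 1) (N + n) (by omega)
          have hsplit : ∑ i ∈ Finset.Ico (N - 1) (N + n), w (f i) (f (i + 1))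
              = w (f (N - 1)) (f (N - 1 + 1)) + ∑ i ∈ Finset.Ico N (N + n), w (f i) (f (i + 1)) := by
            rw [Finset.sum_eq_sum_Ico_succ_bot (by omega : N - 1 < N + n),
              show N - 1 + 1 = N from by omega]
          have hC : ∑ i ∈ Finset.Ico N (N + n), w (f i) (f (i + 1)) = C := by
            rw [Finset.sum_Ico_eq_sum_range, show N + n - N = n from by omega, hCdef]
            refine Finset.sum_congr rfl fun i _ => ?_
            rw [hper i, show N + i + 1 = N + (i + 1) from by omega, hper (i + 1)]
          rw [hsplit, hC, show N - 1 + 1 = N from by omega] at hc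
          exact hc
        linarith [hW₂, hchain, hWCAT]
      -- apply the induction hypothesis to c₂
      obtain ⟨σ₂, hσ₂sub, hσ₂ct, hσ₂pc, hσ₂tot⟩ := ih S₂ c₂ hcyc₂ hsup₂ hms'2 (by rw [hS₂card])
      have hσ₂supp : σ₂.support = S₂ := by
        refine Finset.eq_of_subset_of_card_le hσ₂sub ?_
        have := Equiv.Perm.sum_cycleType σ₂
        rw [hσ₂ct] at this
        omega
      have hdisjperm : c₁.Disjoint σ₂ :=
        Equiv.Perm.disjoint_iff_disjoint_support.mpr (by rw [hsup₁, hσ₂supp]; exact hdisj)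
      set σ' := c₁ * σ₂ with hσ'def
      have hfix₁ : ∀ x ∈ S₁, σ₂ x = x := by
        intro x hx
        apply Equiv.Perm.notMem_support.mp
        rw [hσ₂supp]
        exact Finset.disjoint_left.mp hdisj hx
      have hfix₂ : ∀ x ∈ S₂, c₁ x = x := by
        intro x hx
        apply Equiv.Perm.notMem_support.mp
        rw [hsup₁]
        exact Finset.disjoint_right.mp hdisj hx
      have happly₁ : ∀ x ∈ S₁, σ' x = c₁ x := by
        intro x hx
        rw [hσ'def, Equiv.Perm.mul_apply, hfix₁ x hx]
      have hmem₂ : ∀ x ∈ S₂, σ₂ x ∈ S₂ := by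
        intro x hx
        rw [← hσ₂supp] at hx ⊢
        exact Equiv.Perm.apply_mem_support.mpr hx
      have happly₂ : ∀ x ∈ S₂, σ' x = σ₂ x := by
        intro x hx
        rw [hσ'def, Equiv.Perm.mul_apply, hfix₂ _ (hmem₂ x hx)]
      refine ⟨σ', ?_, ?_, ?_, ?_⟩
      · rw [hdisjperm.support_mul, hsup₁, hσ₂supp, hunion]
      · rw [hdisjperm.cycleType_mul, hσ₂ct, hcyc₁.cycleType, hsup₁, hS₁card]
        rfl
      · intro x hx
        rw [← hunion, Finset.mem_union] at hx
        rcases hx with hx | hx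
        · have hx' : x ∈ c₁.support := by rw [hsup₁]; exact hx
          have hcO : σ'.cycleOf x = c₁ := by
            rw [hσ'def, Equiv.Perm.cycleOf_mul_of_apply_right_eq_self hdisjperm.commute x
              (hfix₁ x hx)]
            exact hcyc₁.cycleOf_eq (Equiv.Perm.mem_support.mp hx')
          rw [hcO, hsup₁]
          have heq : ∑ u ∈ S₁, w u (σ' u) = W₁ := by
            rw [hW₁def]
            exact Finset.sum_congr rfl fun u hu => by rw [happly₁ u hu]
          rw [hWdef] at hW₁le
          rw [heq]
          exact hW₁le
        · have hcO : σ'.cycleOf x = σ₂.cycleOf x := by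
            rw [hσ'def, hdisjperm.commute.eq,
              Equiv.Perm.cycleOf_mul_of_apply_right_eq_self hdisjperm.symm.commute x
                (hfix₂ x hx)]
          rw [hcO]
          have hsub : (σ₂.cycleOf x).support ⊆ S₂ :=
            le_trans (Equiv.Perm.support_cycleOf_le σ₂ x) (le_of_eq hσ₂supp)
          have heq : ∑ u ∈ (σ₂.cycleOf x).support, w u (σ' u)
              = ∑ u ∈ (σ₂.cycleOf x).support, w u (σ₂ u) :=
            Finset.sum_congr rfl fun u hu => by rw [happly₂ u (hsub hu)]
          rw [heq]
          rw [hWdef] at hW₂le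
          exact le_trans (le_trans (hσ₂pc x hx) hW₂le) (le_refl _)
      · rw [← hunion, Finset.sum_union hdisj]
        have he₁ : ∑ v ∈ S₁, w v (σ' v) = W₁ := by
          rw [hW₁def]
          exact Finset.sum_congr rfl fun u hu => by rw [happly₁ u hu]
        have he₂ : ∑ v ∈ S₂, w v (σ' v) = ∑ v ∈ S₂, w v (σ₂ v) :=
          Finset.sum_congr rfl fun u hu => by rw [happly₂ u hu]
        rw [he₁, he₂]
        have hb₂ : ∑ v ∈ S₂, w v (σ₂ v) ≤ (Multiset.card ms' : ℝ) * W₂ := hσ₂tot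
        have hb₂' : (Multiset.card ms' : ℝ) * W₂ ≤ (Multiset.card ms' : ℝ) * W := by
          apply mul_le_mul_of_nonneg_left hW₂le
          positivity
        have hcard : (Multiset.card (n ::ₘ ms') : ℝ) = (Multiset.card ms' : ℝ) + 1 := by
          rw [Multiset.card_cons]
          push_cast
          ring
        rw [hcard]
        have h1 : (1 : ℝ) * W = W := one_mul W
        nlinarith [hW₁le, hb₂, hb₂', hWnn]

/-- Splitting a directed cycle: let `σ` be a single directed cycle on a vertex
set `S` (a cyclic permutation with support `S`), with nonnegative weights
satisfying the triangle inequality, and let `λ₁,…,λ_z ≥ 2` (given as a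
multiset `ms` with `z = ms.card`) sum to `|S|`. Then there is a permutation
`σ'` of `S` whose cycle lengths are exactly `λ₁,…,λ_z`, each of whose cycles
has weight at most the weight of `σ`; in particular the weight of `σ'` is at
most `z` times the weight of `σ`. -/
theorem directed_cycle_splitting
    {V : Type*} [Fintype V] [DecidableEq V]
    (w : V → V → ℝ) (hnn : ∀ u v, 0 ≤ w u v)
    (htri : ∀ u x v, w u v ≤ w u x + w x v)
    (S : Finset V) (σ : Equiv.Perm V)
    (hcyc : σ.IsCycle) (hsupp : σ.support = S)
    (ms : Multiset ℕ) (hms : ∀ x ∈ ms, 2 ≤ x) (hsum : ms.sum = S.card) :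
    ∃ σ' : Equiv.Perm V, σ'.support ⊆ S ∧ σ'.cycleType = ms ∧
      (∀ v ∈ S, ∑ u ∈ (σ'.cycleOf v).support, w u (σ' u)
          ≤ ∑ x ∈ S, w x (σ x)) ∧
      ∑ v ∈ S, w v (σ' v) ≤ (ms.card : ℝ) * ∑ v ∈ S, w v (σ v) := by
  exact aux_split w hnn htri ms S σ hcyc hsupp hms hsum
end
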